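/- arXiv:1402.1729 — 3 statements merged into one kernel-verified Lean document; each statement's English description precedes it below -/
import Mathlib

section
/- Let n ≥ 1, u, v ∈ ℝ^n, let ψ̂, θ̂ ∈ C_c^∞(ℝ^n) with supp ψ̂ ⊂ {ξ : 1/2 ≤ |ξ| ≤ 2} and supp θ̂ ⊂ {η : |η| ≤ 1/4}, and let m : (0,1] × ℝ^n → ℂ be measurable in t, smooth in x, with sup_{0<t≤1, x∈ℝ^n} |∂_x^γ m(t,x)| ≤ A_γ < ∞ for every multi-index γ. Define λ(x,ξ,η) = ∫_0^1 ψ̂(tξ) e^{i t ξ·v} θ̂(tη) e^{i t η·u} m(t,x) dt/t. Then λ is smooth on ℝ^n × ℝ^n × ℝ^n and belongs to S^0_{1,0}(n,2) with seminorms depending polynomially on |u| and |v|: for all multi-indices α, β, γ there exist a constant C (depending on ψ, θ, the A's, n, α, β, γ) and an integer k ≥ 0 such that |∂_ξ^α ∂_η^β ∂_x^γ λ(x,ξ,η)| ≤ C (1+|u|+|v|)^k (1+|ξ|+|η|)^{−|α|−|β|} for all x, ξ, η. -/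
/-!
With `a(ζ, ω) = ψ̂(ζ) e^{iζ·v} θ̂(ω) e^{iω·u}` the symbol is
`λ(x, ξ, η) = ∫₀¹ a(tξ, tη) m(t, x) dt/t`, and `a` is smooth and supported in the annulus
`1/2 ≤ ‖(ζ, ω)‖ ≤ 2` of the frequency space.
Integrals `∫₀¹ tᴺ a(tq) m(t, x) dt/t` of this shape are stable under differentiation: `∂ₓ` falls
on `m`, while `∂_ξ` and `∂_η` fall on `a(tq)` and produce an extra factor `t`, raising `N` by one.
On the support of the integrand `t ≈ 1/‖q‖`, so `1/t` is bounded locally uniformly in `q`, which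
justifies differentiating under the integral sign, and `t` ranges over an interval of length
`≲ 1/‖q‖` on which `tᴺ/t ≲ ‖q‖ (1 + ‖q‖)⁻ᴺ`, which gives the decay `(1 + ‖q‖)⁻ᴺ`.
-/

open MeasureTheory
open scoped ENNReal NNReal

noncomputable section

/-- Euclidean space `ℝ^n`. -/
abbrev En (n : ℕ) : Type := EuclideanSpace ℝ (Fin n)

/-- Partial derivative in the first (spatial) variable of a function of three variables. -/
def pdX {n : ℕ} (i : Fin n) (σ : En n → En n → En n → ℂ) : En n → En n → En n → ℂ :=
  fun x ξ η => fderiv ℝ (fun y => σ y ξ η) x (EuclideanSpace.single i 1)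

/-- Partial derivative in the second (first frequency) variable. -/
def pdXi {n : ℕ} (i : Fin n) (σ : En n → En n → En n → ℂ) : En n → En n → En n → ℂ :=
  fun x ξ η => fderiv ℝ (fun ζ => σ x ζ η) ξ (EuclideanSpace.single i 1)

/-- Partial derivative in the third (second frequency) variable. -/
def pdEta {n : ℕ} (i : Fin n) (σ : En n → En n → En n → ℂ) : En n → En n → En n → ℂ :=
  fun x ξ η => fderiv ℝ (fun ζ => σ x ξ ζ) η (EuclideanSpace.single i 1)

/-- Iterated partial derivative `∂_ξ^α ∂_η^β ∂_x^γ σ`, multi-indices as lists. -/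
def mderiv {n : ℕ} (α β γ : List (Fin n)) (σ : En n → En n → En n → ℂ) :
    En n → En n → En n → ℂ :=
  α.foldr pdXi (β.foldr pdEta (γ.foldr pdX σ))

/-- Partial derivative of a one-variable complex function. -/
def pd1 {n : ℕ} (i : Fin n) (f : En n → ℂ) : En n → ℂ :=
  fun x => fderiv ℝ f x (EuclideanSpace.single i 1)

/-- The paraproduct symbol `λ(x,ξ,η) = ∫_0^1 ψ̂(tξ)e^{itξ·v} θ̂(tη)e^{itη·u} m(t,x) dt/t`. -/
def paraSymbol {n : ℕ} (ψhat θhat : En n → ℂ) (u v : En n) (mfun : ℝ → En n → ℂ)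
    (x ξ η : En n) : ℂ :=
  ∫ t in Set.Ioc (0 : ℝ) 1,
    ψhat (t • ξ) * Complex.exp (Complex.I * ((t * (inner ℝ ξ v : ℝ) : ℝ) : ℂ)) *
      θhat (t • η) * Complex.exp (Complex.I * ((t * (inner ℝ η u : ℝ) : ℝ) : ℂ)) *
      mfun t x / (t : ℂ)

open Set Metric Filter Topology
open scoped ContDiff

theorem norm_snd_le_of_mem_ball {E F : Type*} [SeminormedAddCommGroup E]
    [SeminormedAddCommGroup F] {p p₀ : E × F} {ε : ℝ} (hp : p ∈ ball p₀ ε) :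
    ‖p.2‖ ≤ ‖p₀.2‖ + ε := by
  have : ‖p.2 - p₀.2‖ < ε := (norm_snd_le (p - p₀)).trans_lt (by rwa [← dist_eq_norm])
  linarith [norm_le_insert' p.2 p₀.2]

section Measurability

variable {α : Type*} [MeasurableSpace α] {μ : Measure α}
  {E F : Type*} [NormedAddCommGroup E] [NormedSpace ℝ E] [NormedAddCommGroup F] [NormedSpace ℝ F]

theorem aestronglyMeasurable_clm_of_apply [FiniteDimensional ℝ E] [MeasurableSpace F]
    [BorelSpace F] [SecondCountableTopology F] {f : α → E →L[ℝ] F}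
    (hf : ∀ y, AEStronglyMeasurable (fun a => f a y) μ) : AEStronglyMeasurable f μ := by
  let e₁ := ContinuousLinearEquiv.ofFinrankEq
    (Module.finrank_fin_fun ℝ (n := Module.finrank ℝ E)).symm
  let e := (e₁.arrowCongr (1 : F ≃L[ℝ] F)).trans (ContinuousLinearEquiv.piRing (Fin _))
  have he : AEStronglyMeasurable (fun a => e (f a)) μ :=
    (aemeasurable_pi_lambda _ fun i =>
      (hf (e₁.symm (Pi.single i 1))).aemeasurable).aestronglyMeasurable
  simpa using e.symm.continuous.comp_aestronglyMeasurable he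

theorem aestronglyMeasurable_fderiv_apply {f : α → E → F} {x : E}
    (hf : ∀ y, AEStronglyMeasurable (fun a => f a y) μ)
    (hd : ∀ᵐ a ∂μ, DifferentiableAt ℝ (f a) x) (w : E) :
    AEStronglyMeasurable (fun a => fderiv ℝ (f a) x w) μ := by
  have hseq : Tendsto (fun k : ℕ => ((k : ℝ) + 1)⁻¹) atTop (𝓝[≠] 0) := by
    refine tendsto_nhdsWithin_iff.2 ⟨?_, Eventually.of_forall fun k => ?_⟩
    · simpa only [one_div] using (tendsto_one_div_add_atTop_nhds_zero_nat :
        Tendsto (fun k : ℕ => 1 / ((k : ℝ) + 1)) atTop (𝓝 0))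
    · simp only [mem_compl_iff, mem_singleton_iff]
      positivity
  refine aestronglyMeasurable_of_tendsto_ae atTop
    (f := fun (k : ℕ) a => ((k : ℝ) + 1) • (f a (x + ((k : ℝ) + 1)⁻¹ • w) - f a x))
    (fun k => ((hf _).sub (hf x)).const_smul _) ?_
  filter_upwards [hd] with a ha
  have hline : HasDerivAt (fun s : ℝ => f a (x + s • w)) (fderiv ℝ (f a) x w) 0 := by
    have hf' : HasFDerivAt (f a) (fderiv ℝ (f a) x) (x + (0 : ℝ) • w) := by
      simpa using ha.hasFDerivAt
    have hl : HasDerivAt (fun s : ℝ => x + s • w) w 0 := by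
      simpa using ((hasDerivAt_id (0 : ℝ)).smul_const w).const_add x
    exact hf'.comp_hasDerivAt (0 : ℝ) hl
  simpa [Function.comp_def, inv_inv] using
    (hasDerivAt_iff_tendsto_slope_zero.1 hline).comp hseq

end Measurability

section Amplitude

variable {X V : Type*} [NormedAddCommGroup V] [NormedSpace ℝ V]

structure IsAnnularCutoff (a : V → ℂ) (r R : ℝ) : Prop where
  pos : 0 < r
  le : r ≤ R
  contDiff : ContDiff ℝ ∞ a
  tsupport_subset : tsupport a ⊆ closedBall 0 R \ ball 0 r

namespace IsAnnularCutoff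

variable {a : V → ℂ} {r R : ℝ}

theorem apply_eq_zero (ha : IsAnnularCutoff a r R) {q : V} (hq : ‖q‖ < r ∨ R < ‖q‖) :
    a q = 0 :=
  image_eq_zero_of_notMem_tsupport fun h => by
    have := ha.tsupport_subset h
    simp only [Set.mem_sdiff, mem_closedBall, dist_zero_right, mem_ball, not_lt] at this
    rcases hq with hq | hq <;> linarith [this.1, this.2]

theorem fderiv_eq_zero (ha : IsAnnularCutoff a r R) {q : V} (hq : ‖q‖ < r) :
    fderiv ℝ a q = 0 :=
  image_eq_zero_of_notMem_tsupport fun h => by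
    have := ha.tsupport_subset (tsupport_fderiv_subset ℝ h)
    simp only [Set.mem_sdiff, mem_ball, dist_zero_right] at this
    exact this.2 hq

theorem fderiv_apply (ha : IsAnnularCutoff a r R) (w : V) :
    IsAnnularCutoff (fun q => fderiv ℝ a q w) r R where
  pos := ha.pos
  le := ha.le
  contDiff := (ha.contDiff.fderiv_right (m := ∞) le_rfl).clm_apply contDiff_const
  tsupport_subset := (tsupport_fderiv_apply_subset ℝ w).trans ha.tsupport_subset

variable [FiniteDimensional ℝ V]

theorem hasCompactSupport (ha : IsAnnularCutoff a r R) : HasCompactSupport a :=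
  (isCompact_closedBall 0 R).of_isClosed_subset (isClosed_tsupport a)
    (ha.tsupport_subset.trans sdiff_subset)

theorem exists_norm_le (ha : IsAnnularCutoff a r R) : ∃ A, ∀ q, ‖a q‖ ≤ A :=
  ha.hasCompactSupport.exists_bound_of_continuous ha.contDiff.continuous

theorem exists_norm_fderiv_le (ha : IsAnnularCutoff a r R) : ∃ A, ∀ q, ‖fderiv ℝ a q‖ ≤ A :=
  (ha.hasCompactSupport.fderiv ℝ).exists_bound_of_continuous
    (ha.contDiff.continuous_fderiv (by simp))

end IsAnnularCutoff

def ampIntegrand (N : ℕ) (a : V → ℂ) (m : ℝ → X → ℂ) (t : ℝ) (p : X × V) : ℂ :=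
  (t ^ N / t) • (a (t • p.2) * m t p.1)

/-- `∫₀¹ tᴺ a(tq) m(t, x) dt/t` at `p = (x, q)`; for the symbol, `q = (ξ, η)`. -/
def ampIntegral (N : ℕ) (a : V → ℂ) (m : ℝ → X → ℂ) (p : X × V) : ℂ :=
  ∫ t in Ioc 0 1, ampIntegrand N a m t p

theorem pow_div_self_le {N : ℕ} {t r ρ : ℝ} (ht : t ∈ Ioc (0 : ℝ) 1) (hr : 0 < r)
    (h : r ≤ t * ρ) : t ^ N / t ≤ ρ / r := by
  rw [div_le_div_iff₀ ht.1 hr]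
  calc t ^ N * r ≤ 1 * r := by gcongr; exact pow_le_one₀ ht.1.le ht.2
    _ ≤ ρ * t := by linarith

theorem norm_le_of_eq_zero_of_norm_le {E : Type*} [NormedAddCommGroup E] {g : ℝ → E}
    {N : ℕ} {K r ρ : ℝ} (hK : 0 ≤ K) (hr : 0 < r) (hρ : 0 ≤ ρ)
    (hzero : ∀ t ∈ Ioc (0 : ℝ) 1, t * ρ < r → g t = 0)
    (hle : ∀ t ∈ Ioc (0 : ℝ) 1, ‖g t‖ ≤ K * (t ^ N / t)) :
    ∀ t ∈ Ioc (0 : ℝ) 1, ‖g t‖ ≤ K * (ρ / r) := by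
  intro t ht
  by_cases h : t * ρ < r
  · rw [hzero t ht h, norm_zero]
    positivity
  · exact (hle t ht).trans (mul_le_mul_of_nonneg_left (pow_div_self_le ht hr (not_lt.1 h)) hK)

theorem ampIntegrand_eq_zero {N : ℕ} {a : V → ℂ} {m : ℝ → X → ℂ} {r R t : ℝ}
    (ha : IsAnnularCutoff a r R) (ht : 0 < t) {p : X × V}
    (h : t * ‖p.2‖ < r ∨ R < t * ‖p.2‖) : ampIntegrand N a m t p = 0 := by
  rw [ampIntegrand, ha.apply_eq_zero (by rwa [norm_smul, Real.norm_of_nonneg ht.le]),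
    zero_mul, smul_zero]

variable [NormedAddCommGroup X] [NormedSpace ℝ X]

structure IsBoundedSmoothFamily (m : ℝ → X → ℂ) : Prop where
  aestronglyMeasurable : ∀ x, AEStronglyMeasurable (fun t => m t x) (volume.restrict (Ioc 0 1))
  contDiff : ∀ t ∈ Ioc (0 : ℝ) 1, ContDiff ℝ ∞ (m t)
  bounded : ∀ k : ℕ, ∃ C, ∀ t ∈ Ioc (0 : ℝ) 1, ∀ x, ‖iteratedFDeriv ℝ k (m t) x‖ ≤ C

namespace IsBoundedSmoothFamily

variable {m : ℝ → X → ℂ}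

theorem exists_norm_le (hm : IsBoundedSmoothFamily m) :
    ∃ C, ∀ t ∈ Ioc (0 : ℝ) 1, ∀ x, ‖m t x‖ ≤ C := by
  simpa only [norm_iteratedFDeriv_zero] using hm.bounded 0

theorem exists_norm_fderiv_le (hm : IsBoundedSmoothFamily m) :
    ∃ C, ∀ t ∈ Ioc (0 : ℝ) 1, ∀ x, ‖fderiv ℝ (m t) x‖ ≤ C := by
  simpa only [norm_iteratedFDeriv_one] using hm.bounded 1

theorem fderiv_apply (hm : IsBoundedSmoothFamily m) (w : X) :
    IsBoundedSmoothFamily (fun t x => fderiv ℝ (m t) x w) where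
  aestronglyMeasurable x := aestronglyMeasurable_fderiv_apply hm.aestronglyMeasurable
    ((ae_restrict_iff' measurableSet_Ioc).2 <| Eventually.of_forall fun t ht =>
      ((hm.contDiff t ht).differentiable (by simp)) x) w
  contDiff t ht := ((hm.contDiff t ht).fderiv_right (m := ∞) le_rfl).clm_apply contDiff_const
  bounded k := by
    obtain ⟨C, hC⟩ := hm.bounded (k + 1)
    refine ⟨‖w‖ * C, fun t ht x => ?_⟩
    calc ‖iteratedFDeriv ℝ k (fun x => fderiv ℝ (m t) x w) x‖
        ≤ ‖w‖ * ‖iteratedFDeriv ℝ k (fderiv ℝ (m t)) x‖ :=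
          norm_iteratedFDeriv_clm_apply_const
            ((hm.contDiff t ht).fderiv_right (m := ∞) le_rfl).contDiffAt (mod_cast le_top)
      _ ≤ ‖w‖ * C := by
          rw [norm_iteratedFDeriv_fderiv]
          exact mul_le_mul_of_nonneg_left (hC t ht x) (norm_nonneg w)

end IsBoundedSmoothFamily

def ampIntegrandFDeriv (N : ℕ) (a : V → ℂ) (m : ℝ → X → ℂ) (t : ℝ) (p : X × V) :
    X × V →L[ℝ] ℂ :=
  (t ^ N / t) • (a (t • p.2) • (fderiv ℝ (m t) p.1).comp (ContinuousLinearMap.fst ℝ X V)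
    + m t p.1 • (fderiv ℝ a (t • p.2)).comp (t • ContinuousLinearMap.snd ℝ X V))

variable {N : ℕ} {a : V → ℂ} {m : ℝ → X → ℂ} {r R t : ℝ}

theorem ampIntegrandFDeriv_eq_zero (ha : IsAnnularCutoff a r R) (ht : 0 < t) {p : X × V}
    (h : t * ‖p.2‖ < r) : ampIntegrandFDeriv N a m t p = 0 := by
  have hq : ‖t • p.2‖ < r := by rwa [norm_smul, Real.norm_of_nonneg ht.le]
  ext y <;> simp [ampIntegrandFDeriv, ha.apply_eq_zero (Or.inl hq), ha.fderiv_eq_zero hq]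

theorem ampIntegrandFDeriv_apply (t : ℝ) (p y : X × V) :
    ampIntegrandFDeriv N a m t p y =
      ampIntegrand N a (fun t x => fderiv ℝ (m t) x y.1) t p +
        ampIntegrand (N + 1) (fun q => fderiv ℝ a q y.2) m t p := by
  simp only [ampIntegrandFDeriv, ampIntegrand, ContinuousLinearMap.comp_smulₛₗ,
    Real.ringHom_apply, smul_add, add_apply, smul_apply,
    ContinuousLinearMap.comp_apply, ContinuousLinearMap.coe_fst', ContinuousLinearMap.coe_snd',
    smul_eq_mul, Complex.real_smul, Complex.ofReal_div, Complex.ofReal_pow, Complex.ofReal_mul,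
    pow_succ, add_right_inj]
  ring

theorem hasFDerivAt_ampIntegrand (ha : IsAnnularCutoff a r R) (hm : IsBoundedSmoothFamily m)
    (ht : t ∈ Ioc (0 : ℝ) 1) (p : X × V) :
    HasFDerivAt (ampIntegrand N a m t) (ampIntegrandFDeriv N a m t p) p := by
  have hA : HasFDerivAt (fun q : X × V => a (t • q.2))
      ((fderiv ℝ a (t • p.2)).comp (t • ContinuousLinearMap.snd ℝ X V)) p :=
    (ha.contDiff.differentiable (by simp) _).hasFDerivAt.comp p (hasFDerivAt_snd.const_smul t)
  have hM : HasFDerivAt (fun q : X × V => m t q.1)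
      ((fderiv ℝ (m t) p.1).comp (ContinuousLinearMap.fst ℝ X V)) p :=
    ((hm.contDiff t ht).differentiable (by simp) _).hasFDerivAt.comp p hasFDerivAt_fst
  exact (hA.mul hM).const_smul (t ^ N / t)

theorem aestronglyMeasurable_ampIntegrand (ha : IsAnnularCutoff a r R)
    (hm : IsBoundedSmoothFamily m) (p : X × V) :
    AEStronglyMeasurable (fun t => ampIntegrand N a m t p) (volume.restrict (Ioc 0 1)) :=
  (((measurable_id.pow_const N).div measurable_id).aestronglyMeasurable).smul
    ((ha.contDiff.continuous.comp (continuous_id.smul continuous_const)).aestronglyMeasurable.mul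
      (hm.aestronglyMeasurable p.1))

variable [FiniteDimensional ℝ V]

theorem exists_norm_ampIntegrand_le (ha : IsAnnularCutoff a r R)
    (hm : IsBoundedSmoothFamily m) :
    ∃ K, 0 ≤ K ∧ ∀ t ∈ Ioc (0 : ℝ) 1, ∀ p : X × V,
      ‖ampIntegrand N a m t p‖ ≤ K * (t ^ N / t) := by
  obtain ⟨A, hA⟩ := ha.exists_norm_le
  obtain ⟨M, hM⟩ := hm.exists_norm_le
  have hA0 : 0 ≤ A := (norm_nonneg _).trans (hA 0)
  have hM0 : 0 ≤ M := (norm_nonneg _).trans (hM 1 ⟨one_pos, le_rfl⟩ 0)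
  refine ⟨A * M, by positivity, fun t ht p => ?_⟩
  rw [ampIntegrand, norm_smul, norm_mul, Real.norm_of_nonneg (by have := ht.1; positivity),
    mul_comm (A * M)]
  exact mul_le_mul_of_nonneg_left (mul_le_mul (hA _) (hM t ht _) (norm_nonneg _) hA0)
    (by have := ht.1; positivity)

theorem exists_norm_ampIntegrandFDeriv_le (ha : IsAnnularCutoff a r R)
    (hm : IsBoundedSmoothFamily m) :
    ∃ K, 0 ≤ K ∧ ∀ t ∈ Ioc (0 : ℝ) 1, ∀ p : X × V,
      ‖ampIntegrandFDeriv N a m t p‖ ≤ K * (t ^ N / t) := by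
  obtain ⟨A₀, hA₀⟩ := ha.exists_norm_le
  obtain ⟨A₁, hA₁⟩ := ha.exists_norm_fderiv_le
  obtain ⟨M₀, hM₀⟩ := hm.exists_norm_le
  obtain ⟨M₁, hM₁⟩ := hm.exists_norm_fderiv_le
  have h1 : (1 : ℝ) ∈ Ioc 0 1 := ⟨one_pos, le_rfl⟩
  have hA₀0 : 0 ≤ A₀ := (norm_nonneg _).trans (hA₀ 0)
  have hM₀0 : 0 ≤ M₀ := (norm_nonneg _).trans (hM₀ 1 h1 0)
  refine ⟨A₀ * M₁ + M₀ * A₁, ?_, fun t ht p => ?_⟩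
  · have := (norm_nonneg _).trans (hA₁ 0)
    have := (norm_nonneg _).trans (hM₁ 1 h1 0)
    positivity
  have hfst : ‖(fderiv ℝ (m t) p.1).comp (ContinuousLinearMap.fst ℝ X V)‖ ≤ M₁ :=
    (ContinuousLinearMap.opNorm_comp_le _ _).trans <|
      (mul_le_of_le_one_right (norm_nonneg _) (ContinuousLinearMap.norm_fst_le ℝ X V)).trans
        (hM₁ t ht _)
  have hsnd : ‖(fderiv ℝ a (t • p.2)).comp (t • ContinuousLinearMap.snd ℝ X V)‖ ≤ A₁ := by
    refine (ContinuousLinearMap.opNorm_comp_le _ _).trans <|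
      (mul_le_of_le_one_right (norm_nonneg _) ?_).trans (hA₁ _)
    rw [norm_smul, Real.norm_of_nonneg ht.1.le]
    exact mul_le_one₀ ht.2 (norm_nonneg _) (ContinuousLinearMap.norm_snd_le ℝ X V)
  have hsum : ‖a (t • p.2) • (fderiv ℝ (m t) p.1).comp (ContinuousLinearMap.fst ℝ X V) +
      m t p.1 • (fderiv ℝ a (t • p.2)).comp (t • ContinuousLinearMap.snd ℝ X V)‖ ≤
      A₀ * M₁ + M₀ * A₁ :=
    (norm_add_le _ _).trans <| add_le_add
      ((ContinuousLinearMap.opNorm_smul_le _ _).trans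
        (mul_le_mul (hA₀ _) hfst (norm_nonneg _) hA₀0))
      ((ContinuousLinearMap.opNorm_smul_le _ _).trans
        (mul_le_mul (hM₀ t ht _) hsnd (norm_nonneg _) hM₀0))
  rw [ampIntegrandFDeriv, norm_smul, Real.norm_of_nonneg (by have := ht.1; positivity),
    mul_comm _ (t ^ N / t)]
  exact mul_le_mul_of_nonneg_left hsum (by have := ht.1; positivity)

theorem integrable_ampIntegrand (ha : IsAnnularCutoff a r R) (hm : IsBoundedSmoothFamily m)
    (p : X × V) : Integrable (fun t => ampIntegrand N a m t p) (volume.restrict (Ioc 0 1)) := by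
  obtain ⟨K, hK, hle⟩ := exists_norm_ampIntegrand_le (N := N) ha hm
  refine (integrable_const (K * (‖p.2‖ / r))).mono'
    (aestronglyMeasurable_ampIntegrand ha hm p) ?_
  filter_upwards [ae_restrict_mem measurableSet_Ioc] with t ht
  exact norm_le_of_eq_zero_of_norm_le hK ha.pos (norm_nonneg _)
    (fun t ht h => ampIntegrand_eq_zero ha ht.1 (Or.inl h)) (fun t ht => hle t ht p) t ht

theorem norm_ampIntegral_le (ha : IsAnnularCutoff a r R) (hm : IsBoundedSmoothFamily m) :
    ∃ C, 0 ≤ C ∧ ∀ p : X × V, ‖ampIntegral N a m p‖ ≤ C / (1 + ‖p.2‖) ^ N := by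
  obtain ⟨K, hK, hle⟩ := exists_norm_ampIntegrand_le (N := N) ha hm
  have hr := ha.pos
  have hR : 0 < R := hr.trans_le ha.le
  refine ⟨K * (1 + R) ^ N * (R / r), by positivity, fun p => ?_⟩
  set s := ‖p.2‖
  rcases lt_or_ge s r with hs | hs
  · have hzero : ampIntegral N a m p = 0 := by
      refine setIntegral_eq_zero_of_forall_eq_zero fun t ht =>
        ampIntegrand_eq_zero ha ht.1 (Or.inl ?_)
      calc t * s ≤ 1 * s := by gcongr; exact ht.2
        _ < r := by linarith
    rw [hzero, norm_zero]
    positivity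
  have hs0 : 0 < s := hr.trans_le hs
  set D := K * (((1 + R) / (1 + s)) ^ N * (s / r))
  -- The integrand lives on `r / s ≤ t ≤ R / s`, where `t⁻¹ ≤ s / r` and `t ≤ (1 + R) / (1 + s)`.
  have hpt : ∀ t ∈ Ioc (0 : ℝ) 1,
      ‖ampIntegrand N a m t p‖ ≤ (Ioc 0 (R / s)).indicator (fun _ => D) t := by
    intro t ht
    by_cases hsupp : r ≤ t * s ∧ t * s ≤ R
    · rw [indicator_of_mem (show t ∈ Ioc 0 (R / s) from
        ⟨ht.1, by rw [le_div_iff₀ hs0]; exact hsupp.2⟩)]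
      have ht_le : t ≤ (1 + R) / (1 + s) := by
        rw [le_div_iff₀ (by positivity)]
        nlinarith [ht.2, hsupp.2]
      have ht_inv : t⁻¹ ≤ s / r := by
        rw [inv_eq_one_div, div_le_div_iff₀ ht.1 hr]
        linarith [hsupp.1]
      calc ‖ampIntegrand N a m t p‖ ≤ K * (t ^ N * t⁻¹) := by
            simpa only [div_eq_mul_inv] using hle t ht p
        _ ≤ D := mul_le_mul_of_nonneg_left (mul_le_mul (pow_le_pow_left₀ ht.1.le ht_le N)
            ht_inv (inv_nonneg.2 ht.1.le) (by positivity)) hK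
    · rw [not_and_or, not_le, not_le] at hsupp
      rw [ampIntegrand_eq_zero ha ht.1 hsupp, norm_zero]
      exact indicator_nonneg (fun _ _ => by positivity) t
  calc ‖ampIntegral N a m p‖
      ≤ ∫ t in Ioc 0 1, (Ioc 0 (R / s)).indicator (fun _ => D) t :=
        norm_integral_le_of_norm_le ((integrable_const D).indicator measurableSet_Ioc)
          ((ae_restrict_iff' measurableSet_Ioc).2 (Eventually.of_forall hpt))
    _ = volume.real (Ioc 0 (R / s) ∩ Ioc 0 1) * D := by
        rw [integral_indicator_const _ measurableSet_Ioc,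
          measureReal_restrict_apply measurableSet_Ioc, smul_eq_mul]
    _ ≤ volume.real (Ioc 0 (R / s)) * D :=
        mul_le_mul_of_nonneg_right
          (measureReal_mono inter_subset_left measure_Ioc_lt_top.ne) (by positivity)
    _ = K * (1 + R) ^ N * (R / r) / (1 + s) ^ N := by
        rw [Real.volume_real_Ioc_of_le (by positivity), sub_zero]
        simp only [D, div_pow]
        field_simp

variable [FiniteDimensional ℝ X]

theorem aestronglyMeasurable_ampIntegrandFDeriv (ha : IsAnnularCutoff a r R)
    (hm : IsBoundedSmoothFamily m) (p : X × V) :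
    AEStronglyMeasurable (fun t => ampIntegrandFDeriv N a m t p) (volume.restrict (Ioc 0 1)) :=
  aestronglyMeasurable_clm_of_apply fun y => by
    simp_rw [ampIntegrandFDeriv_apply]
    exact (aestronglyMeasurable_ampIntegrand ha (hm.fderiv_apply y.1) p).add
      (aestronglyMeasurable_ampIntegrand (ha.fderiv_apply y.2) hm p)

theorem integrable_ampIntegrandFDeriv (ha : IsAnnularCutoff a r R)
    (hm : IsBoundedSmoothFamily m) (p : X × V) :
    Integrable (fun t => ampIntegrandFDeriv N a m t p) (volume.restrict (Ioc 0 1)) := by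
  obtain ⟨K, hK, hle⟩ := exists_norm_ampIntegrandFDeriv_le (N := N) ha hm
  refine (integrable_const (K * (‖p.2‖ / r))).mono'
    (aestronglyMeasurable_ampIntegrandFDeriv ha hm p) ?_
  filter_upwards [ae_restrict_mem measurableSet_Ioc] with t ht
  exact norm_le_of_eq_zero_of_norm_le hK ha.pos (norm_nonneg _)
    (fun t ht h => ampIntegrandFDeriv_eq_zero ha ht.1 h) (fun t ht => hle t ht p) t ht

theorem hasFDerivAt_ampIntegral (ha : IsAnnularCutoff a r R) (hm : IsBoundedSmoothFamily m)
    (p₀ : X × V) :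
    HasFDerivAt (ampIntegral N a m) (∫ t in Ioc 0 1, ampIntegrandFDeriv N a m t p₀) p₀ := by
  obtain ⟨K, hK, hle⟩ := exists_norm_ampIntegrandFDeriv_le (N := N) ha hm
  -- On `ball p₀ 1` the integrand vanishes for `t < r / (‖p₀.2‖ + 1)`, so `t⁻¹` stays bounded.
  refine hasFDerivAt_integral_of_dominated_of_fderiv_le
    (F' := fun p t => ampIntegrandFDeriv N a m t p) (bound := fun _ => K * ((‖p₀.2‖ + 1) / r))
    (ball_mem_nhds p₀ one_pos)
    (Eventually.of_forall fun p => aestronglyMeasurable_ampIntegrand ha hm p)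
    (integrable_ampIntegrand ha hm p₀) (aestronglyMeasurable_ampIntegrandFDeriv ha hm p₀) ?_
    (integrable_const _) ?_
  · filter_upwards [ae_restrict_mem measurableSet_Ioc] with t ht p hp
    refine norm_le_of_eq_zero_of_norm_le hK ha.pos (by positivity) (fun t ht h => ?_)
      (fun t ht => hle t ht p) t ht
    exact ampIntegrandFDeriv_eq_zero ha ht.1
      ((mul_le_mul_of_nonneg_left (norm_snd_le_of_mem_ball hp) ht.1.le).trans_lt h)
  · filter_upwards [ae_restrict_mem measurableSet_Ioc] with t ht p _
    exact hasFDerivAt_ampIntegrand ha hm ht p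

theorem differentiable_ampIntegral (ha : IsAnnularCutoff a r R) (hm : IsBoundedSmoothFamily m) :
    Differentiable ℝ (ampIntegral N a m) :=
  fun p => (hasFDerivAt_ampIntegral ha hm p).differentiableAt

theorem fderiv_ampIntegral_apply (ha : IsAnnularCutoff a r R) (hm : IsBoundedSmoothFamily m)
    (p y : X × V) :
    fderiv ℝ (ampIntegral N a m) p y =
      ampIntegral N a (fun t x => fderiv ℝ (m t) x y.1) p +
        ampIntegral (N + 1) (fun q => fderiv ℝ a q y.2) m p := by
  rw [(hasFDerivAt_ampIntegral ha hm p).fderiv,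
    ContinuousLinearMap.integral_apply (integrable_ampIntegrandFDeriv ha hm p)]
  simp_rw [ampIntegrandFDeriv_apply]
  exact integral_add (integrable_ampIntegrand ha (hm.fderiv_apply y.1) p)
    (integrable_ampIntegrand (ha.fderiv_apply y.2) hm p)

theorem contDiff_ampIntegral (ha : IsAnnularCutoff a r R) (hm : IsBoundedSmoothFamily m) :
    ContDiff ℝ ∞ (ampIntegral N a m) := by
  suffices h : ∀ k : ℕ, ∀ (N : ℕ) (a : V → ℂ) (m : ℝ → X → ℂ), IsAnnularCutoff a r R →
      IsBoundedSmoothFamily m → ContDiff ℝ k (ampIntegral N a m) from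
    contDiff_infty.2 fun k => h k N a m ha hm
  intro k
  induction k with
  | zero =>
    intro N a m ha hm
    rw [Nat.cast_zero, contDiff_zero]
    exact (differentiable_ampIntegral ha hm).continuous
  | succ k ih =>
    intro N a m ha hm
    refine contDiff_succ_iff_fderiv_apply.2 ⟨differentiable_ampIntegral ha hm,
      fun h => absurd h (WithTop.natCast_ne_top k), fun y => ?_⟩
    simp_rw [fderiv_ampIntegral_apply ha hm]
    exact (ih N a _ ha (hm.fderiv_apply y.1)).add (ih (N + 1) _ m (ha.fderiv_apply y.2) hm)

theorem fderiv_ampIntegral_apply_inl (ha : IsAnnularCutoff a r R) (hm : IsBoundedSmoothFamily m)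
    (p : X × V) (w : X) :
    fderiv ℝ (ampIntegral N a m) p (w, 0) = ampIntegral N a (fun t x => fderiv ℝ (m t) x w) p := by
  simp [fderiv_ampIntegral_apply ha hm, ampIntegral, ampIntegrand]

theorem fderiv_ampIntegral_apply_inr (ha : IsAnnularCutoff a r R) (hm : IsBoundedSmoothFamily m)
    (p : X × V) (w : V) :
    fderiv ℝ (ampIntegral N a m) p (0, w) = ampIntegral (N + 1) (fun q => fderiv ℝ a q w) m p := by
  simp [fderiv_ampIntegral_apply ha hm, ampIntegral, ampIntegrand]

end Amplitude

section Symbol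

variable {n N : ℕ} {a : En n × En n → ℂ} {m : ℝ → En n → ℂ} {r R : ℝ}

theorem exists_bound_iteratedFDeriv_of_pd1 {ι : Type*} {f : ι → En n → ℂ}
    (hf : ∀ j, ContDiff ℝ ∞ (f j))
    (hb : ∀ γ : List (Fin n), ∃ A, ∀ j x, ‖γ.foldr pd1 (f j) x‖ ≤ A) (k : ℕ) :
    ∃ C, ∀ j x, ‖iteratedFDeriv ℝ k (f j) x‖ ≤ C := by
  induction k generalizing f with
  | zero =>
    obtain ⟨A, hA⟩ := hb []
    exact ⟨A, fun j x => by simpa using hA j x⟩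
  | succ k ih =>
    have hpd : ∀ j i, ContDiff ℝ ∞ (pd1 i (f j)) := fun j i =>
      ((hf j).fderiv_right (m := ∞) le_rfl).clm_apply contDiff_const
    choose C hC using fun i => ih (fun j => hpd j i)
      (fun γ => by simpa [List.foldr_append] using hb (γ ++ [i]))
    -- `fderiv f = ∑ i, (pd1 i f) • eᵢ*`, so `D^(k+1) f` is controlled by the `D^k (pd1 i f)`.
    let L : Fin n → ℂ →L[ℝ] En n →L[ℝ] ℂ := fun i =>
      ContinuousLinearMap.smulRightL ℝ (En n) ℂ (EuclideanSpace.proj i)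
    refine ⟨∑ i, ‖L i‖ * C i, fun j x => ?_⟩
    have hfd : fderiv ℝ (f j) = fun y => ∑ i, L i (pd1 i (f j) y) := by
      funext y
      ext v
      have hv : v = ∑ i, v i • EuclideanSpace.single i (1 : ℝ) := by
        simpa using ((EuclideanSpace.basisFun (Fin n) ℝ).sum_repr v).symm
      conv_lhs => rw [hv]
      simp [L, pd1]
    rw [← norm_iteratedFDeriv_fderiv, hfd, iteratedFDeriv_fun_sum_apply
      (f := fun i y => L i (pd1 i (f j) y))
      fun i _ => (((L i).contDiff.comp (hpd j i)).of_le (mod_cast le_top)).contDiffAt]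
    refine (norm_sum_le _ _).trans (Finset.sum_le_sum fun i _ => ?_)
    exact ((L i).norm_iteratedFDeriv_comp_left (hpd j i).contDiffAt (mod_cast le_top)).trans
      (mul_le_mul_of_nonneg_left (hC i j x) (norm_nonneg _))

theorem isBoundedSmoothFamily_of_pd1 {mfun : ℝ → En n → ℂ}
    (hm_meas : ∀ x : En n, Measurable fun t : ℝ => mfun t x)
    (hm_smooth : ∀ t ∈ Ioc (0 : ℝ) 1, ContDiff ℝ ∞ (mfun t))
    (hm_bound : ∀ γ : List (Fin n), ∃ A : ℝ, ∀ t ∈ Ioc (0 : ℝ) 1, ∀ x : En n,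
      ‖(γ.foldr pd1 (mfun t)) x‖ ≤ A) :
    IsBoundedSmoothFamily mfun where
  aestronglyMeasurable x := (hm_meas x).aestronglyMeasurable
  contDiff := hm_smooth
  bounded k := by
    obtain ⟨C, hC⟩ := exists_bound_iteratedFDeriv_of_pd1 (f := fun t : Ioc (0 : ℝ) 1 => mfun t)
      (fun t => hm_smooth t t.2) (fun γ => (hm_bound γ).imp fun A hA t => hA t t.2) k
    exact ⟨C, fun t ht => hC ⟨t, ht⟩⟩

def freqProfile (ψhat θhat : En n → ℂ) (u v : En n) (q : En n × En n) : ℂ :=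
  ψhat q.1 * Complex.exp (Complex.I * (inner ℝ q.1 v : ℝ)) *
    θhat q.2 * Complex.exp (Complex.I * (inner ℝ q.2 u : ℝ))

theorem paraSymbol_eq_ampIntegral (ψhat θhat : En n → ℂ) (u v : En n) (mfun : ℝ → En n → ℂ) :
    paraSymbol ψhat θhat u v mfun =
      fun x ξ η => ampIntegral 0 (freqProfile ψhat θhat u v) mfun (x, ξ, η) := by
  funext x ξ η
  simp only [paraSymbol, ampIntegral, ampIntegrand, freqProfile, Prod.smul_mk,
    real_inner_smul_left, pow_zero, Complex.real_smul]
  refine setIntegral_congr_fun measurableSet_Ioc fun t _ => ?_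
  push_cast
  ring

theorem isAnnularCutoff_freqProfile {ψhat θhat : En n → ℂ} (u v : En n)
    (hψ_smooth : ContDiff ℝ ∞ ψhat) (hψ_supp : ∀ ξ : En n, ‖ξ‖ < 1 / 2 ∨ 2 < ‖ξ‖ → ψhat ξ = 0)
    (hθ_smooth : ContDiff ℝ ∞ θhat) (hθ_supp : ∀ η : En n, 1 / 4 < ‖η‖ → θhat η = 0) :
    IsAnnularCutoff (freqProfile ψhat θhat u v) (1 / 2) 2 where
  pos := by norm_num
  le := by norm_num
  contDiff := by
    have hexp (w : En n) :
        ContDiff ℝ ∞ fun ζ : En n => Complex.exp (Complex.I * (inner ℝ ζ w : ℝ)) :=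
      (contDiff_const.mul
        (Complex.ofRealCLM.contDiff.comp (contDiff_id.inner ℝ contDiff_const))).cexp
    exact (((hψ_smooth.comp contDiff_fst).mul ((hexp v).comp contDiff_fst)).mul
      (hθ_smooth.comp contDiff_snd)).mul ((hexp u).comp contDiff_snd)
  tsupport_subset := by
    refine closure_minimal (fun q hq => ?_) (isClosed_closedBall.sdiff isOpen_ball)
    have hψ : ψhat q.1 ≠ 0 := fun h => hq (by simp [freqProfile, h])
    have hθ : θhat q.2 ≠ 0 := fun h => hq (by simp [freqProfile, h])
    have h1 := mt (hψ_supp q.1) hψ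
    have h2 := mt (hθ_supp q.2) hθ
    simp only [not_or, not_lt] at h1 h2
    simp only [Set.mem_sdiff, mem_closedBall, dist_zero_right, mem_ball, not_lt, Prod.norm_def]
    exact ⟨max_le h1.2 (by linarith), le_max_of_le_left h1.1⟩

theorem pdX_ampIntegral (ha : IsAnnularCutoff a r R) (hm : IsBoundedSmoothFamily m) (i : Fin n) :
    pdX i (fun x ξ η => ampIntegral N a m (x, ξ, η)) = fun x ξ η =>
      ampIntegral N a (fun t y => fderiv ℝ (m t) y (EuclideanSpace.single i 1)) (x, ξ, η) := by
  funext x ξ η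
  rw [pdX, fderiv_fun_comp x (differentiable_ampIntegral ha hm _) (by fun_prop),
    (hasFDerivAt_prodMk_left x (ξ, η)).fderiv]
  exact fderiv_ampIntegral_apply_inl ha hm (x, ξ, η) (EuclideanSpace.single i 1)

theorem pdXi_ampIntegral (ha : IsAnnularCutoff a r R) (hm : IsBoundedSmoothFamily m) (i : Fin n) :
    pdXi i (fun x ξ η => ampIntegral N a m (x, ξ, η)) = fun x ξ η =>
      ampIntegral (N + 1) (fun q => fderiv ℝ a q (EuclideanSpace.single i 1, 0)) m (x, ξ, η) := by
  funext x ξ η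
  rw [pdXi, fderiv_fun_comp ξ (differentiable_ampIntegral ha hm _) (by fun_prop),
    ((hasFDerivAt_const x ξ).prodMk (hasFDerivAt_prodMk_left ξ η)).fderiv]
  exact fderiv_ampIntegral_apply_inr ha hm (x, ξ, η) (EuclideanSpace.single i 1, 0)

theorem pdEta_ampIntegral (ha : IsAnnularCutoff a r R) (hm : IsBoundedSmoothFamily m) (i : Fin n) :
    pdEta i (fun x ξ η => ampIntegral N a m (x, ξ, η)) = fun x ξ η =>
      ampIntegral (N + 1) (fun q => fderiv ℝ a q (0, EuclideanSpace.single i 1)) m (x, ξ, η) := by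
  funext x ξ η
  rw [pdEta, fderiv_fun_comp η (differentiable_ampIntegral ha hm _) (by fun_prop),
    ((hasFDerivAt_const x η).prodMk (hasFDerivAt_prodMk_right ξ η)).fderiv]
  exact fderiv_ampIntegral_apply_inr ha hm (x, ξ, η) (0, EuclideanSpace.single i 1)

def IsAmplitudeIntegral (N : ℕ) (σ : En n → En n → En n → ℂ) : Prop :=
  ∃ (a : En n × En n → ℂ) (m : ℝ → En n → ℂ) (r R : ℝ),
    IsAnnularCutoff a r R ∧ IsBoundedSmoothFamily m ∧ σ = fun x ξ η => ampIntegral N a m (x, ξ, η)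

namespace IsAmplitudeIntegral

variable {σ : En n → En n → En n → ℂ}

theorem pdX (h : IsAmplitudeIntegral N σ) (i : Fin n) : IsAmplitudeIntegral N (_root_.pdX i σ) := by
  obtain ⟨a, m, r, R, ha, hm, rfl⟩ := h
  exact ⟨a, _, r, R, ha, hm.fderiv_apply _, pdX_ampIntegral ha hm i⟩

theorem pdXi (h : IsAmplitudeIntegral N σ) (i : Fin n) :
    IsAmplitudeIntegral (N + 1) (_root_.pdXi i σ) := by
  obtain ⟨a, m, r, R, ha, hm, rfl⟩ := h
  exact ⟨_, m, r, R, ha.fderiv_apply _, hm, pdXi_ampIntegral ha hm i⟩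

theorem pdEta (h : IsAmplitudeIntegral N σ) (i : Fin n) :
    IsAmplitudeIntegral (N + 1) (_root_.pdEta i σ) := by
  obtain ⟨a, m, r, R, ha, hm, rfl⟩ := h
  exact ⟨_, m, r, R, ha.fderiv_apply _, hm, pdEta_ampIntegral ha hm i⟩

theorem mderiv (h : IsAmplitudeIntegral 0 σ) (α β γ : List (Fin n)) :
    IsAmplitudeIntegral (α.length + β.length) (_root_.mderiv α β γ σ) := by
  have hγ : IsAmplitudeIntegral 0 (γ.foldr _root_.pdX σ) := by
    induction γ with
    | nil => exact h
    | cons i γ ih => exact ih.pdX i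
  have hβ : IsAmplitudeIntegral β.length (β.foldr _root_.pdEta (γ.foldr _root_.pdX σ)) := by
    induction β with
    | nil => exact hγ
    | cons i β ih => exact ih.pdEta i
  induction α with
  | nil => simpa [_root_.mderiv] using hβ
  | cons i α ih => simpa [_root_.mderiv, add_right_comm] using ih.pdXi i

theorem norm_le (h : IsAmplitudeIntegral N σ) :
    ∃ C, ∀ x ξ η : En n, ‖σ x ξ η‖ ≤ C * (1 + ‖ξ‖ + ‖η‖) ^ (-(N : ℝ)) := by
  obtain ⟨a, m, r, R, ha, hm, rfl⟩ := h
  obtain ⟨C, hC0, hC⟩ := norm_ampIntegral_le (N := N) ha hm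
  refine ⟨2 ^ N * C, fun x ξ η => (hC (x, ξ, η)).trans ?_⟩
  have hq : 1 + ‖ξ‖ + ‖η‖ ≤ 2 * (1 + ‖(ξ, η)‖) := by
    rw [Prod.norm_def]
    linarith [le_max_left ‖ξ‖ ‖η‖, le_max_right ‖ξ‖ ‖η‖]
  rw [Real.rpow_neg (by positivity), Real.rpow_natCast, ← div_eq_mul_inv,
    div_le_div_iff₀ (by positivity) (by positivity)]
  calc C * (1 + ‖ξ‖ + ‖η‖) ^ N ≤ C * (2 * (1 + ‖(ξ, η)‖)) ^ N := by gcongr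
    _ = 2 ^ N * C * (1 + ‖(ξ, η)‖) ^ N := by rw [mul_pow]; ring

end IsAmplitudeIntegral

end Symbol

theorem paraproduct_symbol_S0_general (n : ℕ) (u v : En n)
    (ψhat θhat : En n → ℂ)
    (hψ_smooth : ContDiff ℝ (⊤ : ℕ∞) ψhat)
    (hψ_supp : ∀ ξ : En n, ‖ξ‖ < 1 / 2 ∨ 2 < ‖ξ‖ → ψhat ξ = 0)
    (hθ_smooth : ContDiff ℝ (⊤ : ℕ∞) θhat)
    (hθ_supp : ∀ η : En n, 1 / 4 < ‖η‖ → θhat η = 0)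
    (mfun : ℝ → En n → ℂ)
    (hm_meas : ∀ x : En n, Measurable fun t : ℝ => mfun t x)
    (hm_smooth : ∀ t ∈ Set.Ioc (0 : ℝ) 1, ContDiff ℝ (⊤ : ℕ∞) (mfun t))
    (hm_bound : ∀ γ : List (Fin n), ∃ A : ℝ, ∀ t ∈ Set.Ioc (0 : ℝ) 1, ∀ x : En n,
      ‖(γ.foldr pd1 (mfun t)) x‖ ≤ A) :
    ContDiff ℝ (⊤ : ℕ∞)
      (fun p : En n × En n × En n => paraSymbol ψhat θhat u v mfun p.1 p.2.1 p.2.2) ∧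
    ∀ α β γ : List (Fin n), ∃ (C : ℝ) (k : ℕ), ∀ x ξ η : En n,
      ‖mderiv α β γ (paraSymbol ψhat θhat u v mfun) x ξ η‖ ≤
        C * (1 + ‖u‖ + ‖v‖) ^ k *
          (1 + ‖ξ‖ + ‖η‖) ^ (-(α.length : ℝ) - (β.length : ℝ)) := by
  have ha := isAnnularCutoff_freqProfile u v hψ_smooth hψ_supp hθ_smooth hθ_supp
  have hm := isBoundedSmoothFamily_of_pd1 hm_meas hm_smooth hm_bound
  have hsymb := paraSymbol_eq_ampIntegral ψhat θhat u v mfun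
  refine ⟨by simpa [hsymb] using contDiff_ampIntegral ha hm, fun α β γ => ?_⟩
  obtain ⟨C, hC⟩ := (IsAmplitudeIntegral.mderiv ⟨_, _, _, _, ha, hm, hsymb⟩ α β γ).norm_le
  refine ⟨C, 0, fun x ξ η => ?_⟩
  rw [pow_zero, mul_one, show -(α.length : ℝ) - β.length = -((α.length + β.length : ℕ) : ℝ) by
    push_cast; ring]
  exact hC x ξ η

/-- **Lemma 4.4 of the paper (paraproducts are bilinear pseudodifferential operators of
order `0`).**  With `ψ̂` supported in the annulus `{1/2 ≤ |ξ| ≤ 2}`, `θ̂` supported in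
the ball `{|η| ≤ 1/4}`, and `m(t,x)` smooth in `x` with all `x`-derivatives bounded
uniformly in `t ∈ (0,1]`, the symbol `λ` is smooth and lies in `S^0_{1,0}(n,2)`, with
seminorms depending polynomially on `|u|` and `|v|`. -/
theorem paraproduct_symbol_S0 (n : ℕ) (hn : 1 ≤ n) (u v : En n)
    (ψhat θhat : En n → ℂ)
    (hψ_smooth : ContDiff ℝ (⊤ : ℕ∞) ψhat) (hψ_cpt : HasCompactSupport ψhat)
    (hψ_supp : ∀ ξ : En n, ‖ξ‖ < 1 / 2 ∨ 2 < ‖ξ‖ → ψhat ξ = 0)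
    (hθ_smooth : ContDiff ℝ (⊤ : ℕ∞) θhat) (hθ_cpt : HasCompactSupport θhat)
    (hθ_supp : ∀ η : En n, 1 / 4 < ‖η‖ → θhat η = 0)
    (mfun : ℝ → En n → ℂ)
    (hm_meas : ∀ x : En n, Measurable fun t : ℝ => mfun t x)
    (hm_smooth : ∀ t ∈ Set.Ioc (0 : ℝ) 1, ContDiff ℝ (⊤ : ℕ∞) (mfun t))
    (hm_bound : ∀ γ : List (Fin n), ∃ A : ℝ, ∀ t ∈ Set.Ioc (0 : ℝ) 1, ∀ x : En n,
      ‖(γ.foldr pd1 (mfun t)) x‖ ≤ A) :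
    ContDiff ℝ (⊤ : ℕ∞)
      (fun p : En n × En n × En n => paraSymbol ψhat θhat u v mfun p.1 p.2.1 p.2.2) ∧
    ∀ α β γ : List (Fin n), ∃ (C : ℝ) (k : ℕ), ∀ x ξ η : En n,
      ‖mderiv α β γ (paraSymbol ψhat θhat u v mfun) x ξ η‖ ≤
        C * (1 + ‖u‖ + ‖v‖) ^ k *
          (1 + ‖ξ‖ + ‖η‖) ^ (-(α.length : ℝ) - (β.length : ℝ)) :=
  paraproduct_symbol_S0_general n u v ψhat θhat hψ_smooth hψ_supp hθ_smooth hθ_supp mfun hm_meas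
    hm_smooth hm_bound

end
end

section
/- Let n ≥ 1, m₂ < 0, 0 < κ ≤ 1, and let Ψ : ℝ^n → ℂ be a Schwartz function with ∫_{ℝ^n} Ψ(z) dz = 0. For t ∈ (0,1) define K_t(z) = ∫_κ^{1/t} s^{m₂} (ts)^{−n} Ψ(z/(ts)) ds/s. Then: (i) ∫_{ℝ^n} K_t(z) dz = 0 for every t ∈ (0,1); (ii) for each 0 < δ < −m₂ there is a constant C (depending on n, δ, m₂, κ and Ψ) such that |K_t(z)| ≤ C t^{−n} (1 + |z|/t)^{−n−δ} for all z ∈ ℝ^n and t ∈ (0,1); (iii) there is a constant C with |K_t(z) − K_t(z′)| ≤ C t^{−n−1} |z − z′| for all z, z′ ∈ ℝ^n and t ∈ (0,1). -/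
open MeasureTheory SchwartzMap
open scoped ENNReal NNReal

noncomputable section

/-- The kernel `K_t(z) = ∫_κ^{1/t} s^{m₂} (ts)^{-n} Ψ(z/(ts)) ds/s`. -/
def Kker (n : ℕ) (m₂ κ : ℝ) (Ψ : En n → ℂ) (t : ℝ) (z : En n) : ℂ :=
  ∫ s in Set.Ioc κ (1 / t), (s ^ m₂ * ((t * s) ^ n)⁻¹ / s : ℝ) • Ψ ((t * s)⁻¹ • z)

/-! Absorbing the weight, `K_t(z) = t⁻ⁿ ∫_κ^{1/t} s^{m₂-n-1} Ψ(z/(ts)) ds`, a superposition of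
dilates of `Ψ`. Each dilate has integral zero, so (i) follows from Fubini. For `s ≥ κ` and
`κ ≤ 1` one has `1 + |z|/t ≤ (s/κ)(1 + |z|/(ts))`, so the decay of `Ψ` of order `n + δ` costs only
a factor `s^{n+δ}`, and `s^{m₂+δ-1}` is integrable on `(κ, ∞)` because `δ < -m₂`; this gives (ii).
For (iii), `Ψ` is Lipschitz, so the difference costs a factor `|z - z'|/(ts)`, and `s^{m₂-n-2}` is
integrable on `(κ, ∞)`. -/

open Set

namespace SchwartzMap

variable {E F : Type*} [NormedAddCommGroup E] [NormedSpace ℝ E] [NormedAddCommGroup F]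
  [NormedSpace ℝ F]

theorem exists_norm_le_mul_one_add_norm_rpow_neg (f : 𝓢(E, F)) (r : ℝ) :
    ∃ C, 0 ≤ C ∧ ∀ x, ‖f x‖ ≤ C * (1 + ‖x‖) ^ (-r) := by
  set k := ⌈r⌉₊
  set C := 2 ^ k * (Finset.Iic (k, 0)).sup (fun m => SchwartzMap.seminorm ℝ m.1 m.2) f
  refine ⟨C, by positivity, fun x => ?_⟩
  have hx : 1 ≤ 1 + ‖x‖ := le_add_of_nonneg_right (norm_nonneg x)
  have hdecay : (1 + ‖x‖) ^ k * ‖f x‖ ≤ C := by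
    simpa using one_add_le_sup_seminorm_apply (𝕜 := ℝ) (m := (k, 0)) le_rfl le_rfl f x
  calc ‖f x‖ ≤ C * (1 + ‖x‖) ^ (-(k : ℝ)) := by
        rwa [Real.rpow_neg (by positivity), Real.rpow_natCast, ← div_eq_mul_inv,
          le_div_iff₀' (by positivity)]
    _ ≤ C * (1 + ‖x‖) ^ (-r) := by
        gcongr; exact Nat.le_ceil r

theorem lipschitzWith_seminorm (f : 𝓢(E, F)) :
    LipschitzWith (SchwartzMap.seminorm ℝ 0 1 f).toNNReal f :=
  lipschitzWith_of_nnnorm_fderiv_le f.differentiable fun x => by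
    rw [← NNReal.coe_le_coe, coe_nnnorm, Real.coe_toNNReal _ (apply_nonneg _ _)]
    simpa using f.norm_iteratedFDeriv_le_seminorm ℝ 1 x

end SchwartzMap

theorem one_add_rpow_neg_le_mul {x y u β : ℝ} (hy : 0 ≤ y) (hu : 1 ≤ u) (hyx : y ≤ u * x)
    (hβ : 0 ≤ β) : (1 + x) ^ (-β) ≤ u ^ β * (1 + y) ^ (-β) := by
  have hx : 0 ≤ x := nonneg_of_mul_nonneg_right (hy.trans hyx) (by linarith)
  rw [Real.rpow_neg (by positivity), Real.rpow_neg (by positivity), ← Real.inv_rpow (by positivity),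
    ← Real.inv_rpow (by positivity), ← Real.mul_rpow (by positivity) (by positivity)]
  gcongr
  rw [← div_eq_mul_inv, le_div_iff₀ (by positivity), inv_mul_le_iff₀ (by positivity)]
  nlinarith

theorem norm_setIntegral_Ioc_le_mul_integral_Ioi_rpow {F : Type*} [NormedAddCommGroup F]
    [NormedSpace ℝ F] {f : ℝ → F} {a b p A : ℝ} (ha : 0 < a) (hp : p < -1) (hA : 0 ≤ A)
    (hf : ∀ s ∈ Ioc a b, ‖f s‖ ≤ A * s ^ p) :
    ‖∫ s in Ioc a b, f s‖ ≤ A * ∫ s in Ioi a, s ^ p := by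
  have hint : IntegrableOn (fun s => A * s ^ p) (Ioi a) :=
    (integrableOn_Ioi_rpow_of_lt hp ha).const_mul A
  calc ‖∫ s in Ioc a b, f s‖ ≤ ∫ s in Ioc a b, A * s ^ p :=
        norm_integral_le_of_norm_le (hint.mono_set Ioc_subset_Ioi_self)
          ((ae_restrict_mem measurableSet_Ioc).mono hf)
    _ ≤ ∫ s in Ioi a, A * s ^ p :=
        setIntegral_mono_set hint
          ((ae_restrict_mem measurableSet_Ioi).mono fun s hs =>
            mul_nonneg hA (Real.rpow_nonneg (ha.trans hs).le p))
          Ioc_subset_Ioi_self.eventuallyLE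
    _ = A * ∫ s in Ioi a, s ^ p := integral_const_mul A _

theorem rpow_mul_inv_mul_pow_div {t s : ℝ} (ht : 0 < t) (hs : 0 < s) (m : ℝ) (n : ℕ) :
    s ^ m * ((t * s) ^ n)⁻¹ / s = t ^ (-(n : ℝ)) * s ^ (m - n - 1) := by
  rw [Real.rpow_sub hs, Real.rpow_sub hs, Real.rpow_neg ht.le, Real.rpow_natCast,
    Real.rpow_natCast, Real.rpow_one, mul_pow]
  field_simp

theorem integrableOn_Ioc_rpow_smul_comp_smul {E G : Type*} [NormedAddCommGroup E]
    [NormedSpace ℝ E] [NormedAddCommGroup G] [NormedSpace ℝ G] {f : E → G} (hf : Continuous f)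
    {a b t : ℝ} (ha : 0 < a) (ht : 0 < t) (p : ℝ) (z : E) :
    IntegrableOn (fun s => s ^ p • f ((t * s)⁻¹ • z)) (Ioc a b) := by
  have hpos : ∀ s ∈ Icc a b, 0 < s := fun s hs => ha.trans_le hs.1
  refine (ContinuousOn.integrableOn_Icc ?_).mono_set Ioc_subset_Icc_self
  exact (continuousOn_id.rpow_const fun s hs => Or.inl (hpos s hs).ne').smul
    (hf.comp_continuousOn (((continuousOn_const.mul continuousOn_id).inv₀
      fun s hs => (mul_pos ht (hpos s hs)).ne').smul continuousOn_const))

section Dilates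

variable {E F : Type*} [NormedAddCommGroup E] [NormedSpace ℝ E] [MeasurableSpace E]
  [BorelSpace E] [FiniteDimensional ℝ E] (μ : Measure E) [μ.IsAddHaarMeasure]
  [NormedAddCommGroup F] [NormedSpace ℝ F]

theorem integral_norm_smul_comp_smul (f : E → F) (a c : ℝ) :
    ∫ z, ‖a • f (c • z)‖ ∂μ = |a| * |(c ^ Module.finrank ℝ E)⁻¹| * ∫ z, ‖f z‖ ∂μ := by
  simp_rw [norm_smul, Real.norm_eq_abs]
  rw [integral_const_mul, Measure.integral_comp_smul μ (fun z => ‖f z‖), smul_eq_mul, mul_assoc]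

theorem integral_setIntegral_smul_comp_smul_eq_zero [CompleteSpace F] {f : E → F}
    (hf : Continuous f) (hfi : Integrable f μ) (hf0 : ∫ z, f z ∂μ = 0) {g c : ℝ → ℝ} {a b : ℝ}
    (hg : ContinuousOn g (Icc a b)) (hc : ContinuousOn c (Icc a b))
    (hc0 : ∀ s ∈ Icc a b, c s ≠ 0) :
    ∫ z, (∫ s in Ioc a b, g s • f (c s • z)) ∂μ = 0 := by
  set F : E × ℝ → F := Function.uncurry fun z s => g s • f (c s • z)
  have hcont : ContinuousOn F (univ ×ˢ Icc a b) :=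
    (hg.comp continuousOn_snd fun p hp => hp.2).smul (hf.comp_continuousOn
      ((hc.comp continuousOn_snd fun p hp => hp.2).smul continuousOn_fst))
  have hmeas : AEStronglyMeasurable F (μ.prod (volume.restrict (Ioc a b))) := by
    rw [← Measure.restrict_univ (μ := μ), Measure.prod_restrict]
    exact (hcont.mono (prod_mono subset_rfl Ioc_subset_Icc_self)).aestronglyMeasurable
      (MeasurableSet.univ.prod measurableSet_Ioc)
  have hint : Integrable F (μ.prod (volume.restrict (Ioc a b))) := by
    rw [integrable_prod_iff' hmeas]
    refine ⟨(ae_restrict_mem measurableSet_Ioc).mono fun s hs =>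
      (hfi.comp_smul (hc0 s (Ioc_subset_Icc_self hs))).smul (g s), ?_⟩
    have hbound : ContinuousOn
        (fun s => |g s| * |(c s ^ Module.finrank ℝ E)⁻¹| * ∫ z, ‖f z‖ ∂μ) (Icc a b) :=
      ((hg.abs.mul ((hc.pow _).inv₀ fun s hs => pow_ne_zero _ (hc0 s hs)).abs).mul
        continuousOn_const)
    refine ((hbound.integrableOn_Icc).mono_set Ioc_subset_Icc_self).congr ?_
    exact (ae_restrict_mem measurableSet_Ioc).mono fun s _ =>
      (integral_norm_smul_comp_smul μ f (g s) (c s)).symm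
  rw [integral_integral_swap hint]
  refine setIntegral_eq_zero_of_forall_eq_zero fun s _ => ?_
  rw [integral_smul, Measure.integral_comp_smul μ f, hf0, smul_zero, smul_zero]

end Dilates

section Kernel

variable {n : ℕ} {m₂ κ t : ℝ}

theorem Kker_eq_smul_integral (hκ : 0 < κ) (ht : 0 < t) (Ψ : En n → ℂ)
    (z : En n) :
    Kker n m₂ κ Ψ t z =
      t ^ (-(n : ℝ)) • ∫ s in Ioc κ (1 / t), s ^ (m₂ - n - 1) • Ψ ((t * s)⁻¹ • z) := by
  rw [Kker, ← integral_smul]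
  refine setIntegral_congr_fun measurableSet_Ioc fun s hs => ?_
  rw [rpow_mul_inv_mul_pow_div ht (hκ.trans hs.1), smul_smul]

theorem integral_Kker_eq_zero (hκ : 0 < κ) (ht : 0 < t) {Ψ : En n → ℂ} (hΨc : Continuous Ψ)
    (hΨi : Integrable Ψ) (hΨ : ∫ z, Ψ z = 0) : ∫ z, Kker n m₂ κ Ψ t z = 0 := by
  have hpos : ∀ s ∈ Icc κ (1 / t), 0 < s := fun s hs => hκ.trans_le hs.1
  simp_rw [Kker_eq_smul_integral hκ ht]
  rw [integral_smul, integral_setIntegral_smul_comp_smul_eq_zero volume hΨc hΨi hΨ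
    (g := fun s => s ^ (m₂ - n - 1)) (c := fun s => (t * s)⁻¹)
    (continuousOn_id.rpow_const fun s hs => Or.inl (hpos s hs).ne')
    ((continuousOn_const.mul continuousOn_id).inv₀ fun s hs => (mul_pos ht (hpos s hs)).ne')
    fun s hs => inv_ne_zero (mul_pos ht (hpos s hs)).ne', smul_zero]

theorem norm_Kker_le_of_decay {Ψ : En n → ℂ} {C δ : ℝ} (hC : 0 ≤ C) (hnδ : 0 ≤ n + δ)
    (hδ : δ < -m₂) (hΨ : ∀ x, ‖Ψ x‖ ≤ C * (1 + ‖x‖) ^ (-(n + δ))) (hκ : 0 < κ) (hκ1 : κ ≤ 1)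
    (ht : 0 < t) (z : En n) :
    ‖Kker n m₂ κ Ψ t z‖ ≤ C * κ ^ (-(n + δ)) * (∫ s in Ioi κ, s ^ (m₂ + δ - 1)) *
      t ^ (-(n : ℝ)) * (1 + ‖z‖ / t) ^ (-(n : ℝ) - δ) := by
  set A := C * κ ^ (-(n + δ)) * (1 + ‖z‖ / t) ^ (-(n + δ))
  have hpt : ∀ s ∈ Ioc κ (1 / t), ‖s ^ (m₂ - n - 1) • Ψ ((t * s)⁻¹ • z)‖ ≤
      A * s ^ (m₂ + δ - 1) := by
    intro s hs
    have hs0 : 0 < s := hκ.trans hs.1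
    have hdil : (1 + ‖(t * s)⁻¹ • z‖) ^ (-(n + δ)) ≤
        (s / κ) ^ (n + δ) * (1 + ‖z‖ / t) ^ (-(n + δ)) := by
      refine one_add_rpow_neg_le_mul (by positivity) ((one_le_div hκ).2 hs.1.le) ?_ hnδ
      rw [norm_smul, Real.norm_of_nonneg (by positivity)]
      calc ‖z‖ / t ≤ ‖z‖ / (t * κ) :=
            div_le_div_of_nonneg_left (norm_nonneg z) (by positivity)
              (mul_le_of_le_one_right ht.le hκ1)
        _ = s / κ * ((t * s)⁻¹ * ‖z‖) := by field_simp
    calc ‖s ^ (m₂ - n - 1) • Ψ ((t * s)⁻¹ • z)‖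
        ≤ s ^ (m₂ - n - 1) * (C * ((s / κ) ^ (n + δ) * (1 + ‖z‖ / t) ^ (-(n + δ)))) := by
          rw [norm_smul, Real.norm_of_nonneg (by positivity)]
          gcongr
          exact (hΨ _).trans (mul_le_mul_of_nonneg_left hdil hC)
      _ = A * s ^ (m₂ + δ - 1) := by
          rw [Real.div_rpow hs0.le hκ.le, div_eq_mul_inv, ← Real.rpow_neg hκ.le,
            show m₂ + δ - 1 = m₂ - n - 1 + (n + δ) by ring, Real.rpow_add hs0 (m₂ - n - 1)]
          simp only [A]
          ring
  rw [Kker_eq_smul_integral hκ ht, norm_smul, Real.norm_of_nonneg (by positivity)]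
  calc t ^ (-(n : ℝ)) * ‖∫ s in Ioc κ (1 / t), s ^ (m₂ - n - 1) • Ψ ((t * s)⁻¹ • z)‖
      ≤ t ^ (-(n : ℝ)) * (A * ∫ s in Ioi κ, s ^ (m₂ + δ - 1)) := by
        gcongr
        exact norm_setIntegral_Ioc_le_mul_integral_Ioi_rpow hκ (by linarith) (by positivity) hpt
    _ = _ := by simp only [A, neg_add']; ring

theorem norm_Kker_sub_le_of_lipschitzWith {Ψ : En n → ℂ} {L : ℝ≥0} (hΨ : LipschitzWith L Ψ)
    (hm₂ : m₂ < n + 1) (hκ : 0 < κ) (ht : 0 < t) (z z' : En n) :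
    ‖Kker n m₂ κ Ψ t z - Kker n m₂ κ Ψ t z'‖ ≤
      L * (∫ s in Ioi κ, s ^ (m₂ - n - 2)) * t ^ (-(n : ℝ) - 1) * ‖z - z'‖ := by
  set A := L * t⁻¹ * ‖z - z'‖
  have hpt : ∀ s ∈ Ioc κ (1 / t),
      ‖s ^ (m₂ - n - 1) • (Ψ ((t * s)⁻¹ • z) - Ψ ((t * s)⁻¹ • z'))‖ ≤ A * s ^ (m₂ - n - 2) := by
    intro s hs
    have hs0 : 0 < s := hκ.trans hs.1
    calc ‖s ^ (m₂ - n - 1) • (Ψ ((t * s)⁻¹ • z) - Ψ ((t * s)⁻¹ • z'))‖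
        ≤ s ^ (m₂ - n - 1) * (L * ((t * s)⁻¹ * ‖z - z'‖)) := by
          rw [norm_smul, Real.norm_of_nonneg (by positivity)]
          gcongr
          refine (hΨ.norm_sub_le _ _).trans_eq ?_
          rw [← smul_sub, norm_smul, Real.norm_of_nonneg (by positivity)]
      _ = A * s ^ (m₂ - n - 2) := by
          rw [show m₂ - n - 2 = m₂ - n - 1 - 1 by ring, Real.rpow_sub_one hs0.ne' (m₂ - n - 1),
            mul_inv]
          simp only [A]
          field_simp
  have hΨc := hΨ.continuous
  rw [Kker_eq_smul_integral hκ ht, Kker_eq_smul_integral hκ ht, ← smul_sub,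
    ← integral_sub (integrableOn_Ioc_rpow_smul_comp_smul hΨc hκ ht _ z)
      (integrableOn_Ioc_rpow_smul_comp_smul hΨc hκ ht _ z'), norm_smul,
    Real.norm_of_nonneg (by positivity)]
  simp_rw [← smul_sub]
  calc t ^ (-(n : ℝ)) *
        ‖∫ s in Ioc κ (1 / t), s ^ (m₂ - n - 1) • (Ψ ((t * s)⁻¹ • z) - Ψ ((t * s)⁻¹ • z'))‖
      ≤ t ^ (-(n : ℝ)) * (A * ∫ s in Ioi κ, s ^ (m₂ - n - 2)) := by
        gcongr
        exact norm_setIntegral_Ioc_le_mul_integral_Ioi_rpow hκ (by linarith) (by positivity) hpt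
    _ = _ := by
        rw [Real.rpow_sub_one ht.ne']
        simp only [A]
        ring

end Kernel

theorem Kker_cancellation_decay_lipschitz_general (n : ℕ)
    (m₂ : ℝ) (hm₂ : m₂ < 0) (κ : ℝ) (hκ : 0 < κ) (hκ1 : κ ≤ 1)
    (Ψ : 𝓢(En n, ℂ)) (hΨ : (∫ z : En n, Ψ z) = 0) :
    (∀ t ∈ Set.Ioo (0 : ℝ) 1, (∫ z : En n, Kker n m₂ κ (⇑Ψ) t z) = 0) ∧
    (∀ δ : ℝ, 0 < δ → δ < -m₂ → ∃ C : ℝ, ∀ t ∈ Set.Ioo (0 : ℝ) 1, ∀ z : En n,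
      ‖Kker n m₂ κ (⇑Ψ) t z‖ ≤
        C * t ^ (-(n : ℝ)) * (1 + ‖z‖ / t) ^ (-(n : ℝ) - δ)) ∧
    (∃ C : ℝ, ∀ t ∈ Set.Ioo (0 : ℝ) 1, ∀ z z' : En n,
      ‖Kker n m₂ κ (⇑Ψ) t z - Kker n m₂ κ (⇑Ψ) t z'‖ ≤
        C * t ^ (-(n : ℝ) - 1) * ‖z - z'‖) := by
  refine ⟨fun t ht => integral_Kker_eq_zero hκ ht.1 Ψ.continuous Ψ.integrable hΨ,
    fun δ hδ hδm₂ => ?_, ⟨_, fun t ht => norm_Kker_sub_le_of_lipschitzWith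
      Ψ.lipschitzWith_seminorm (by linarith [(Nat.cast_nonneg n : (0 : ℝ) ≤ n)]) hκ ht.1⟩⟩
  obtain ⟨C, hC, hΨC⟩ := Ψ.exists_norm_le_mul_one_add_norm_rpow_neg (n + δ)
  exact ⟨_, fun t ht => norm_Kker_le_of_decay hC (by positivity) hδm₂ hΨC hκ hκ1 ht.1⟩

/-- **Lemma 4.5 of the paper.** For `m₂ < 0`, `0 < κ ≤ 1` and a Schwartz function `Ψ`
with vanishing integral, the kernel `K_t` satisfies: (i) `∫ K_t = 0`; (ii) the decay
estimate `|K_t(z)| ≤ C t^{-n} (1 + |z|/t)^{-n-δ}` for each `0 < δ < -m₂`; and (iii)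
the Lipschitz estimate `|K_t(z) - K_t(z')| ≤ C t^{-n-1} |z - z'|`, all uniformly in
`t ∈ (0,1)`. -/
theorem Kker_cancellation_decay_lipschitz (n : ℕ) (hn : 1 ≤ n)
    (m₂ : ℝ) (hm₂ : m₂ < 0) (κ : ℝ) (hκ : 0 < κ) (hκ1 : κ ≤ 1)
    (Ψ : 𝓢(En n, ℂ)) (hΨ : (∫ z : En n, Ψ z) = 0) :
    (∀ t ∈ Set.Ioo (0 : ℝ) 1, (∫ z : En n, Kker n m₂ κ (⇑Ψ) t z) = 0) ∧
    (∀ δ : ℝ, 0 < δ → δ < -m₂ → ∃ C : ℝ, ∀ t ∈ Set.Ioo (0 : ℝ) 1, ∀ z : En n,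
      ‖Kker n m₂ κ (⇑Ψ) t z‖ ≤
        C * t ^ (-(n : ℝ)) * (1 + ‖z‖ / t) ^ (-(n : ℝ) - δ)) ∧
    (∃ C : ℝ, ∀ t ∈ Set.Ioo (0 : ℝ) 1, ∀ z z' : En n,
      ‖Kker n m₂ κ (⇑Ψ) t z - Kker n m₂ κ (⇑Ψ) t z'‖ ≤
        C * t ^ (-(n : ℝ) - 1) * ‖z - z'‖) :=
  Kker_cancellation_decay_lipschitz_general n m₂ hm₂ κ hκ hκ1 Ψ hΨ

end
end

section
/- Let n ≥ 1, δ > 0 and A > 0. Let μ be a Carleson measure on ℝ^n × (0,∞) and let K : (0,∞) × ℝ^n → ℂ be measurable with |K_t(z)| ≤ A t^{−n}(1 + |z|/t)^{−n−δ} for all t > 0 and z ∈ ℝ^n. Then there is a constant C depending only on n and δ such that for every ε > 0 and every y ∈ ℝ^n, ∫_{ℝ^n × (0,ε)} ( ∫_{|x−y|<ε} |K_t(x−z)| dx ) dμ(z,t) ≤ C A ε^n ‖μ‖_C. In other words, the measure μ̃ on ℝ^n × (0,∞) defined by μ̃(E) = ∫_{ℝ^n×(0,∞)} ( ∫_{ℝ^n}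 1_E(x,t) |K_t(x−z)| dx ) dμ(z,t) is a Carleson measure with ‖μ̃‖_C ≲ A ‖μ‖_C. -/
/-!
Split the strip `ℝ^n × (0, ε)` according to the distance of `z` from `y`. For `‖z - y‖ < 2ε`
the inner integral is at most `A ∫ (1 + ‖x‖)^{-n-δ} dx`, because the bound on `K_t` is an
`L¹`-dilate of that function, and the strip piece lies in a Carleson box of side `2ε`. On the
annulus `2^{k+1}ε ≤ ‖z - y‖ < 2^{k+2}ε` the kernel is at most `A ε^δ (2^k ε)^{-n-δ}` on
`B(y, ε)`, while the piece has `μ`-measure at most `‖μ‖_C (2^{k+2}ε)^n`; the product is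
`A ε^n ‖μ‖_C |B(0,1)| 4^n 2^{-kδ}`, which is summable in `k` since `δ > 0`.
-/

open MeasureTheory
open scoped ENNReal NNReal

noncomputable section

/-- The Carleson norm of a (Borel) measure on `ℝ^n × (0,∞)` (modelled as a measure on
`ℝ^n × ℝ`): `‖μ‖_C = sup_{ε>0, y} ε^{-n} μ({(x,t) : |x-y| < ε, 0 < t < ε})`. -/
def carlesonNorm {n : ℕ} (μ : Measure (En n × ℝ)) : ℝ≥0∞ :=
  ⨆ (ε : ℝ) (_ : 0 < ε) (y : En n),
    μ {p : En n × ℝ | ‖p.1 - y‖ < ε ∧ 0 < p.2 ∧ p.2 < ε} / ENNReal.ofReal (ε ^ n)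

open Metric Set Module

def decayKernel {E : Type*} [Norm E] (s δ t : ℝ) (z : E) : ℝ :=
  t ^ (-s) * (1 + ‖z‖ / t) ^ (-s - δ)

theorem rpow_neg_sub_mul_pow {x : ℝ} (hx : 0 < x) (n : ℕ) (δ : ℝ) :
    x ^ (-(n : ℝ) - δ) * x ^ n = x ^ (-δ) := by
  rw [← Real.rpow_natCast, ← Real.rpow_add hx]; ring_nf

theorem dyadic_far_weight_eq (n : ℕ) (δ : ℝ) {ε : ℝ} (hε : 0 < ε) (j : ℕ) :
    ε ^ δ * (2 ^ j * ε) ^ (-(n : ℝ) - δ) * ε ^ n = (2 ^ j) ^ (-(n : ℝ) - δ) := by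
  calc ε ^ δ * (2 ^ j * ε) ^ (-(n : ℝ) - δ) * ε ^ n
      = (2 ^ j) ^ (-(n : ℝ) - δ) * (ε ^ δ * (ε ^ (-(n : ℝ) - δ) * ε ^ n)) := by
        rw [Real.mul_rpow (by positivity) hε.le]; ring
    _ = (2 ^ j) ^ (-(n : ℝ) - δ) := by
        rw [rpow_neg_sub_mul_pow hε, ← Real.rpow_add hε, add_neg_cancel, Real.rpow_zero, mul_one]

theorem dyadic_box_weight_eq (n : ℕ) (δ : ℝ) (j : ℕ) :
    (2 ^ j : ℝ) ^ (-(n : ℝ) - δ) * (2 ^ (j + 2)) ^ n = 4 ^ n * (2 ^ (-δ)) ^ j := by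
  rw [pow_add, mul_pow, ← mul_assoc, rpow_neg_sub_mul_pow (by positivity),
    ← Real.rpow_pow_comm zero_le_two]
  norm_num [mul_comm]

theorem tsum_dyadic_weight (n : ℕ) (δ : ℝ) (c : ℝ≥0∞) :
    ∑' j : ℕ, c * ENNReal.ofReal ((2 ^ j) ^ (-(n : ℝ) - δ)) * ENNReal.ofReal ((2 ^ (j + 2)) ^ n) =
      c * ENNReal.ofReal (4 ^ n) * (1 - ENNReal.ofReal (2 ^ (-δ)))⁻¹ := by
  have hterm : ∀ j : ℕ, c * ENNReal.ofReal ((2 ^ j) ^ (-(n : ℝ) - δ)) *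
      ENNReal.ofReal ((2 ^ (j + 2)) ^ n) =
        c * ENNReal.ofReal (4 ^ n) * ENNReal.ofReal (2 ^ (-δ)) ^ j :=
    fun j => by
      rw [mul_assoc, ← ENNReal.ofReal_mul (by positivity), dyadic_box_weight_eq,
        ENNReal.ofReal_mul (by positivity), ENNReal.ofReal_pow (by positivity : (0 : ℝ) ≤ 2 ^ (-δ)),
        mul_assoc]
  rw [tsum_congr hterm, ENNReal.tsum_mul_left, ENNReal.tsum_geometric]

theorem two_pow_mul_le_norm_sub_of_mem_ball {E : Type*} [SeminormedAddCommGroup E] {ε : ℝ}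
    (hε : 0 ≤ ε) {j : ℕ} {x y z : E} (hx : x ∈ ball y ε) (hz : 2 ^ (j + 1) * ε ≤ ‖z - y‖) :
    2 ^ j * ε ≤ ‖x - z‖ := by
  rw [mem_ball, dist_eq_norm] at hx
  have htri := norm_sub_le_norm_sub_add_norm_sub z x y
  rw [norm_sub_rev z x] at htri
  nlinarith [one_le_pow₀ (one_le_two (α := ℝ)) (n := j), pow_succ (2 : ℝ) j]

theorem ball_union_iUnion_dyadic_annulus_eq_univ {X : Type*} [PseudoMetricSpace X] (y : X)
    {ε : ℝ} (hε : 0 < ε) :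
    ball y (2 * ε) ∪ ⋃ k : ℕ, ball y (2 ^ (k + 2) * ε) \ ball y (2 ^ (k + 1) * ε) = univ := by
  refine eq_univ_of_forall fun x => ?_
  by_cases hnear : dist x y < 2 * ε
  · exact Or.inl hnear
  obtain ⟨k, hk_le, hk_lt⟩ := exists_nat_pow_near
    ((one_le_div (by positivity)).2 (not_lt.1 hnear)) one_lt_two
  rw [le_div_iff₀ (by positivity)] at hk_le
  rw [div_lt_iff₀ (by positivity)] at hk_lt
  refine Or.inr (mem_iUnion.2 ⟨k, ?_, ?_⟩)
  · rw [mem_ball]; linarith [show (2 : ℝ) ^ (k + 1) * (2 * ε) = 2 ^ (k + 2) * ε by ring]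
  · rw [mem_ball, not_lt]; linarith [show (2 : ℝ) ^ k * (2 * ε) = 2 ^ (k + 1) * ε by ring]

section Kernel

variable {E F : Type*} [NormedAddCommGroup E] [NormedAddCommGroup F]

theorem decayKernel_eq (s δ : ℝ) {t : ℝ} (ht : 0 < t) (z : E) :
    decayKernel s δ t z = t ^ δ * (t + ‖z‖) ^ (-s - δ) := by
  have hsplit : t ^ (-s) = t ^ δ * t ^ (-s - δ) := by rw [← Real.rpow_add ht]; ring_nf
  rw [decayKernel, one_add_div ht.ne', Real.div_rpow (by positivity) ht.le, hsplit]
  field_simp [(Real.rpow_pos_of_pos ht (-s - δ)).ne']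

theorem decayKernel_le_of_le_norm {s δ t ε ρ : ℝ} (hs : 0 ≤ s) (hδ : 0 ≤ δ) (ht : 0 < t)
    (htε : t ≤ ε) (hρ : 0 < ρ) {z : E} (hz : ρ ≤ ‖z‖) :
    decayKernel s δ t z ≤ ε ^ δ * ρ ^ (-s - δ) := by
  rw [decayKernel_eq s δ ht]
  exact mul_le_mul (Real.rpow_le_rpow ht.le htε hδ)
    (Real.rpow_le_rpow_of_nonpos hρ (by linarith [norm_nonneg z]) (by linarith))
    (Real.rpow_nonneg (by positivity) _) (Real.rpow_nonneg (ht.le.trans htε) _)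

theorem nnnorm_le_ofReal_mul_decayKernel {k : E → F} {A s δ t : ℝ} (hA : 0 ≤ A)
    (hk : ∀ u, ‖k u‖ ≤ A * decayKernel s δ t u) (u : E) :
    (‖k u‖₊ : ℝ≥0∞) ≤ ENNReal.ofReal A * ENNReal.ofReal (decayKernel s δ t u) := by
  rw [← ENNReal.ofReal_mul hA, ← enorm_eq_nnnorm, ← ofReal_norm]
  exact ENNReal.ofReal_le_ofReal (hk u)

theorem setLIntegral_nnnorm_comp_sub_le_of_far [MeasurableSpace E] (μ : Measure E) {k : E → F}
    {A s δ t ε ρ : ℝ} (hA : 0 ≤ A) (hs : 0 ≤ s) (hδ : 0 ≤ δ) (ht : 0 < t) (htε : t ≤ ε)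
    (hρ : 0 < ρ) (hk : ∀ u, ‖k u‖ ≤ A * decayKernel s δ t u) {S : Set E}
    (hS : MeasurableSet S) {z : E} (hfar : ∀ x ∈ S, ρ ≤ ‖x - z‖) :
    ∫⁻ x in S, (‖k (x - z)‖₊ : ℝ≥0∞) ∂μ ≤
      ENNReal.ofReal (A * (ε ^ δ * ρ ^ (-s - δ))) * μ S := by
  rw [← setLIntegral_const]
  refine setLIntegral_mono' hS fun x hx => ?_
  refine (nnnorm_le_ofReal_mul_decayKernel hA hk _).trans ?_
  rw [ENNReal.ofReal_mul hA]
  gcongr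
  exact decayKernel_le_of_le_norm hs hδ ht htε hρ (hfar x hx)

variable [NormedSpace ℝ E]

theorem decayKernel_smul (s δ : ℝ) {t : ℝ} (ht : 0 < t) (x : E) :
    decayKernel s δ t (t • x) = t ^ (-s) * (1 + ‖x‖) ^ (-s - δ) := by
  rw [decayKernel, norm_smul, Real.norm_of_nonneg ht.le, mul_div_cancel_left₀ _ ht.ne']

variable [MeasurableSpace E] [BorelSpace E] [FiniteDimensional ℝ E]
  (μ : Measure E) [μ.IsAddHaarMeasure]

theorem lintegral_comp_smul_of_ne_zero (f : E → ℝ≥0∞) {r : ℝ} (hr : r ≠ 0) :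
    ∫⁻ x, f (r • x) ∂μ = ENNReal.ofReal |(r ^ finrank ℝ E)⁻¹| * ∫⁻ x, f x ∂μ := by
  rw [← smul_eq_mul, ← lintegral_smul_measure, ← Measure.map_addHaar_smul μ hr]
  exact (lintegral_map_equiv f (MeasurableEquiv.smul₀ r hr)).symm

theorem lintegral_decayKernel_sub (δ : ℝ) {t : ℝ} (ht : 0 < t) (z : E) :
    ∫⁻ x, ENNReal.ofReal (decayKernel (finrank ℝ E) δ t (x - z)) ∂μ =
      ∫⁻ x, ENNReal.ofReal ((1 + ‖x‖) ^ (-(finrank ℝ E : ℝ) - δ)) ∂μ := by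
  rw [lintegral_sub_right_eq_self (fun x => ENNReal.ofReal (decayKernel _ δ t x)) z]
  have hscale := lintegral_comp_smul_of_ne_zero μ
    (fun x => ENNReal.ofReal (decayKernel (finrank ℝ E) δ t x)) ht.ne'
  simp only [decayKernel_smul _ δ ht, ENNReal.ofReal_mul (Real.rpow_nonneg ht.le _)] at hscale
  rw [lintegral_const_mul' _ _ ENNReal.ofReal_ne_top, abs_of_pos (by positivity),
    ← Real.rpow_natCast, ← Real.rpow_neg ht.le] at hscale
  exact (ENNReal.mul_right_inj (ENNReal.ofReal_pos.2 (by positivity)).ne'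
    ENNReal.ofReal_ne_top).1 hscale.symm

theorem setLIntegral_nnnorm_comp_sub_le {k : E → F} {A δ t : ℝ} (hA : 0 ≤ A) (ht : 0 < t)
    (hk : ∀ u, ‖k u‖ ≤ A * decayKernel (finrank ℝ E) δ t u) (S : Set E) (z : E) :
    ∫⁻ x in S, (‖k (x - z)‖₊ : ℝ≥0∞) ∂μ ≤
      ENNReal.ofReal A * ∫⁻ x, ENNReal.ofReal ((1 + ‖x‖) ^ (-(finrank ℝ E : ℝ) - δ)) ∂μ := by
  calc ∫⁻ x in S, (‖k (x - z)‖₊ : ℝ≥0∞) ∂μ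
      ≤ ∫⁻ x, ENNReal.ofReal A * ENNReal.ofReal (decayKernel (finrank ℝ E) δ t (x - z)) ∂μ :=
        (setLIntegral_le_lintegral _ _).trans
          (lintegral_mono fun x => nnnorm_le_ofReal_mul_decayKernel hA hk _)
    _ = _ := by
        rw [lintegral_const_mul' _ _ ENNReal.ofReal_ne_top, lintegral_decayKernel_sub μ δ ht]

theorem setLIntegral_ball_nnnorm_comp_sub_le_of_dyadic {k : E → F} {A δ t ε : ℝ} (hA : 0 ≤ A)
    (hδ : 0 ≤ δ) (ht : 0 < t) (htε : t ≤ ε)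
    (hk : ∀ u, ‖k u‖ ≤ A * decayKernel (finrank ℝ E) δ t u) {y z : E} {j : ℕ}
    (hz : 2 ^ (j + 1) * ε ≤ ‖z - y‖) :
    ∫⁻ x in ball y ε, (‖k (x - z)‖₊ : ℝ≥0∞) ∂μ ≤
      ENNReal.ofReal A * μ (ball 0 1) * ENNReal.ofReal ((2 ^ j) ^ (-(finrank ℝ E : ℝ) - δ)) := by
  have hε : 0 < ε := ht.trans_le htε
  refine (setLIntegral_nnnorm_comp_sub_le_of_far μ hA (Nat.cast_nonneg _) hδ ht htε
    (by positivity) hk measurableSet_ball fun x hx =>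
      two_pow_mul_le_norm_sub_of_mem_ball hε.le hx hz).trans_eq ?_
  rw [Measure.addHaar_ball_of_pos μ y hε, ← dyadic_far_weight_eq _ δ hε j, ENNReal.ofReal_mul hA,
    ENNReal.ofReal_mul (by positivity : 0 ≤ ε ^ δ * (2 ^ j * ε) ^ (-(finrank ℝ E : ℝ) - δ))]
  ring

end Kernel

section Carleson

variable {n : ℕ} (μ : Measure (En n × ℝ))

theorem measure_prod_Ioo_le_carlesonNorm {s : Set (En n)} {y : En n} {r ε : ℝ} (hr : 0 < r)
    (hsr : s ⊆ ball y r) (hεr : ε ≤ r) :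
    μ (s ×ˢ Ioo 0 ε) ≤ ENNReal.ofReal (r ^ n) * carlesonNorm μ := by
  have hbox : μ {p : En n × ℝ | ‖p.1 - y‖ < r ∧ 0 < p.2 ∧ p.2 < r} / ENNReal.ofReal (r ^ n) ≤
      carlesonNorm μ :=
    le_iSup_of_le r (le_iSup_of_le hr (le_iSup_of_le y le_rfl))
  rw [ENNReal.div_le_iff_le_mul (Or.inl (ENNReal.ofReal_pos.2 (pow_pos hr n)).ne')
    (Or.inl ENNReal.ofReal_ne_top), mul_comm] at hbox
  refine (measure_mono fun p hp => ?_).trans hbox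
  exact ⟨by simpa [dist_eq_norm] using hsr hp.1, hp.2.1, hp.2.2.trans_le hεr⟩

theorem setLIntegral_prod_Ioo_le_carlesonNorm {F : En n × ℝ → ℝ≥0∞} {s : Set (En n)}
    (hs : MeasurableSet s) {y : En n} {r ε : ℝ} (hr : 0 < r) (hsr : s ⊆ ball y r)
    (hεr : ε ≤ r) {c : ℝ≥0∞} (hF : ∀ p ∈ s ×ˢ Ioo 0 ε, F p ≤ c) :
    ∫⁻ p in s ×ˢ Ioo 0 ε, F p ∂μ ≤ c * ENNReal.ofReal (r ^ n) * carlesonNorm μ := by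
  calc ∫⁻ p in s ×ˢ Ioo 0 ε, F p ∂μ
      ≤ ∫⁻ _ in s ×ˢ Ioo 0 ε, c ∂μ := setLIntegral_mono' (hs.prod measurableSet_Ioo) hF
    _ = c * μ (s ×ˢ Ioo 0 ε) := setLIntegral_const _ _
    _ ≤ _ := by
        rw [mul_assoc]; gcongr; exact measure_prod_Ioo_le_carlesonNorm μ hr hsr hεr

theorem setLIntegral_strip_le_of_dyadic {F : En n × ℝ → ℝ≥0∞} (y : En n) {ε : ℝ} (hε : 0 < ε)
    {a : ℝ≥0∞} {b : ℕ → ℝ≥0∞}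
    (hnear : ∀ p : En n × ℝ, ‖p.1 - y‖ < 2 * ε → p.2 ∈ Ioo 0 ε → F p ≤ a)
    (hfar : ∀ (k : ℕ) (p : En n × ℝ), 2 ^ (k + 1) * ε ≤ ‖p.1 - y‖ → p.2 ∈ Ioo 0 ε → F p ≤ b k) :
    ∫⁻ p in {p : En n × ℝ | 0 < p.2 ∧ p.2 < ε}, F p ∂μ ≤
      (a * ENNReal.ofReal (2 ^ n) + ∑' k, b k * ENNReal.ofReal ((2 ^ (k + 2)) ^ n)) *
        ENNReal.ofReal (ε ^ n) * carlesonNorm μ := by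
  have hstrip : {p : En n × ℝ | 0 < p.2 ∧ p.2 < ε} =
      (ball y (2 * ε) ∪ ⋃ k : ℕ, ball y (2 ^ (k + 2) * ε) \ ball y (2 ^ (k + 1) * ε)) ×ˢ
        Ioo 0 ε := by
    rw [ball_union_iUnion_dyadic_annulus_eq_univ y hε, univ_prod]; rfl
  have hscale : ∀ c : ℝ, 0 ≤ c → ENNReal.ofReal ((c * ε) ^ n) =
      ENNReal.ofReal (c ^ n) * ENNReal.ofReal (ε ^ n) := fun c hc => by
    rw [mul_pow, ENNReal.ofReal_mul (by positivity)]
  rw [hstrip, union_prod, iUnion_prod_const, add_mul, add_mul, ← ENNReal.tsum_mul_right,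
    ← ENNReal.tsum_mul_right]
  refine (lintegral_union_le _ _ _).trans (add_le_add ?_
    ((lintegral_iUnion_le _ _).trans (ENNReal.tsum_le_tsum fun k => ?_)))
  · refine (setLIntegral_prod_Ioo_le_carlesonNorm μ measurableSet_ball (by positivity)
      Subset.rfl (by linarith) fun p hp => hnear p ?_ hp.2).trans_eq ?_
    · simpa [dist_eq_norm] using hp.1
    · rw [hscale 2 zero_le_two]; ring
  · refine (setLIntegral_prod_Ioo_le_carlesonNorm μ (measurableSet_ball.diff measurableSet_ball)
      (by positivity) sdiff_subset (le_mul_of_one_le_left hε.le (one_le_pow₀ one_le_two))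
      fun p hp => hfar k p ?_ hp.2).trans_eq ?_
    · simpa [dist_eq_norm] using hp.1.2
    · rw [hscale _ (by positivity)]; ring

end Carleson

def convolutionConst (n : ℕ) (δ : ℝ) : ℝ≥0∞ :=
  (∫⁻ x : En n, ENNReal.ofReal ((1 + ‖x‖) ^ (-(n : ℝ) - δ))) * ENNReal.ofReal (2 ^ n) +
    volume (ball (0 : En n) 1) * ENNReal.ofReal (4 ^ n) * (1 - ENNReal.ofReal (2 ^ (-δ)))⁻¹

theorem convolutionConst_ne_top (n : ℕ) {δ : ℝ} (hδ : 0 < δ) : convolutionConst n δ ≠ ⊤ := by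
  have hI := finite_integral_one_add_norm (μ := (volume : Measure (En n))) (r := n + δ)
    (by rw [finrank_euclideanSpace_fin]; linarith)
  rw [neg_add'] at hI
  have hq : ENNReal.ofReal (2 ^ (-δ)) < 1 :=
    ENNReal.ofReal_lt_one.2 (Real.rpow_lt_one_of_one_lt_of_neg one_lt_two (by linarith))
  have hgeom : (1 - ENNReal.ofReal (2 ^ (-δ)))⁻¹ ≠ ⊤ :=
    ENNReal.inv_ne_top.2 (tsub_pos_of_lt hq).ne'
  have hV : volume (ball (0 : En n) 1) ≠ ⊤ := measure_ball_lt_top.ne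
  unfold convolutionConst
  finiteness

theorem carleson_measure_convolution_general (n : ℕ) (δ : ℝ) (hδ : 0 < δ) :
    ∃ C : ℝ≥0, ∀ A : ℝ, 0 < A → ∀ μ : Measure (En n × ℝ), carlesonNorm μ < ⊤ →
      ∀ K : ℝ → En n → ℂ, (Measurable fun p : ℝ × En n => K p.1 p.2) →
      (∀ t : ℝ, 0 < t → ∀ z : En n,
        ‖K t z‖ ≤ A * t ^ (-(n : ℝ)) * (1 + ‖z‖ / t) ^ (-(n : ℝ) - δ)) →
      ∀ ε : ℝ, 0 < ε → ∀ y : En n,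
        (∫⁻ p in {p : En n × ℝ | 0 < p.2 ∧ p.2 < ε},
            (∫⁻ x in {x : En n | ‖x - y‖ < ε}, (‖K p.2 (x - p.1)‖₊ : ℝ≥0∞)) ∂μ) ≤
          C * ENNReal.ofReal A * ENNReal.ofReal (ε ^ n) * carlesonNorm μ := by
  refine ⟨(convolutionConst n δ).toNNReal, fun A hA μ _ K _ hK ε hε y => ?_⟩
  have hk : ∀ t, 0 < t → ∀ u, ‖K t u‖ ≤ A * decayKernel (finrank ℝ (En n)) δ t u := by
    rw [finrank_euclideanSpace_fin]
    exact fun t ht u => (hK t ht u).trans_eq (mul_assoc _ _ _)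
  have hball : {x : En n | ‖x - y‖ < ε} = ball y ε := by ext; simp [dist_eq_norm]
  rw [ENNReal.coe_toNNReal (convolutionConst_ne_top n hδ), hball]
  calc _ ≤ (ENNReal.ofReal A * (∫⁻ x : En n, ENNReal.ofReal ((1 + ‖x‖) ^ (-(n : ℝ) - δ))) *
          ENNReal.ofReal (2 ^ n) + ∑' k : ℕ, ENNReal.ofReal A * volume (ball (0 : En n) 1) *
            ENNReal.ofReal ((2 ^ k) ^ (-(n : ℝ) - δ)) * ENNReal.ofReal ((2 ^ (k + 2)) ^ n)) *
        ENNReal.ofReal (ε ^ n) * carlesonNorm μ := by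
        refine setLIntegral_strip_le_of_dyadic μ y hε (fun p _ hp => ?_) (fun k p hp ht => ?_)
        · simpa only [finrank_euclideanSpace_fin] using
            setLIntegral_nnnorm_comp_sub_le volume hA.le hp.1 (hk _ hp.1) (ball y ε) p.1
        · simpa only [finrank_euclideanSpace_fin] using
            setLIntegral_ball_nnnorm_comp_sub_le_of_dyadic volume hA.le hδ.le ht.1 ht.2.le
              (hk _ ht.1) hp
    _ = _ := by rw [tsum_dyadic_weight, convolutionConst]; ring

/-- **Lemma 4.8 of the paper (after Uchiyama).** If `μ` is a Carleson measure and
`|K_t(z)| ≤ A t^{-n}(1+|z|/t)^{-n-δ}`, then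
`∫_{ℝ^n×(0,ε)} (∫_{|x-y|<ε} |K_t(x-z)| dx) dμ(z,t) ≤ C A ε^n ‖μ‖_C`, with `C = C(n,δ)`;
i.e. the measure `(∫ |K_t(x-y)| dμ(y,t)) dx` is again a Carleson measure, with norm
controlled by `A ‖μ‖_C`. -/
theorem carleson_measure_convolution (n : ℕ) (hn : 1 ≤ n) (δ : ℝ) (hδ : 0 < δ) :
    ∃ C : ℝ≥0, ∀ A : ℝ, 0 < A → ∀ μ : Measure (En n × ℝ), carlesonNorm μ < ⊤ →
      ∀ K : ℝ → En n → ℂ, (Measurable fun p : ℝ × En n => K p.1 p.2) →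
      (∀ t : ℝ, 0 < t → ∀ z : En n,
        ‖K t z‖ ≤ A * t ^ (-(n : ℝ)) * (1 + ‖z‖ / t) ^ (-(n : ℝ) - δ)) →
      ∀ ε : ℝ, 0 < ε → ∀ y : En n,
        (∫⁻ p in {p : En n × ℝ | 0 < p.2 ∧ p.2 < ε},
            (∫⁻ x in {x : En n | ‖x - y‖ < ε}, (‖K p.2 (x - p.1)‖₊ : ℝ≥0∞)) ∂μ) ≤
          C * ENNReal.ofReal A * ENNReal.ofReal (ε ^ n) * carlesonNorm μ :=
  carleson_measure_convolution_general n δ hδ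
end
end
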